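/- arXiv:2009.10851 — 12 statements merged into one kernel-verified Lean document; each statement's English description precedes it below -/
import Mathlib

section
/- Let F be the finite field with Q elements, Q ≥ 3, let a ∈ F be nonzero, let r, s ≥ 1 be integers, and let f(x) = x^r(x^s + a) ∈ F[x]. Then f permutes F if and only if, for every N ∈ {1, …, Q−1}, the sum Σ_{A ∈ S_N} binom(N, A)·a^{N−A}, computed in F, equals 0 when 1 ≤ N ≤ Q−2 and equals 1 when N = Q−1, where S_N = { A ∈ ℤ : 0 ≤ A ≤ N and A = (j(Q−1) − rN)/s for some j ∈ ℤ }. -/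
/-!
A self-map `g` of a finite field with `q` elements is a permutation as soon as its power sums
`∑ g(x)^N` agree with `∑ x^N` for `1 ≤ N ≤ q - 1`: expanding binomially, the power sums of
`g(x) - c` then agree with those of `x - c`, but `∑ (x - c)^(q-1) = -1`, whereas
`∑ (g(x) - c)^(q-1) = 0` if `c` is not a value of `g`.
For `f(x) = x^r (x^s + a)`, expanding `f(x)^N` binomially and using `∑ x^e = -[q - 1 ∣ e]`
for `e > 0` turns `∑ f(x)^N` into `-∑_{A ∈ S_N} binom(N, A) a^(N-A)`, while
`∑ x^N = -[N = q - 1]`.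
-/

open Finset

theorem Finset.sum_add_pow_eq_of_sum_pow_eq {ι R : Type*} [CommSemiring R] {s : Finset ι}
    {u v : ι → R} {n : ℕ} (h : ∀ k ≤ n, ∑ i ∈ s, u i ^ k = ∑ i ∈ s, v i ^ k) (c : R) :
    ∑ i ∈ s, (u i + c) ^ n = ∑ i ∈ s, (v i + c) ^ n := by
  simp_rw [add_pow, sum_comm (s := s), ← sum_mul]
  exact sum_congr rfl fun k hk => by
    rw [h k (Nat.lt_succ_iff.mp (mem_range.mp hk))]

namespace FiniteField

variable {K : Type*} [Field K] [Fintype K]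

theorem sum_pow_of_ne_zero {n : ℕ} (hn : n ≠ 0) :
    ∑ x : K, x ^ n = if Fintype.card K - 1 ∣ n then -1 else 0 := by
  classical
  rw [← sum_pow_units, Fintype.sum_eq_add_sum_compl 0, zero_pow hn, zero_add,
    sum_subtype {0}ᶜ (p := (· ≠ 0)) (by simp)]
  exact Fintype.sum_equiv (unitsEquivNeZero (G₀ := K)).symm _ _ fun _ => rfl

theorem sum_pow_of_pos_of_le {n : ℕ} (h0 : 0 < n) (hn : n ≤ Fintype.card K - 1) :
    ∑ x : K, x ^ n = if n = Fintype.card K - 1 then -1 else 0 := by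
  rw [sum_pow_of_ne_zero h0.ne']
  exact if_congr ⟨fun hd => le_antisymm hn (Nat.le_of_dvd h0 hd), fun h => h ▸ dvd_rfl⟩ rfl rfl

theorem sum_sub_pow_card_sub_one (c : K) : ∑ x : K, (x - c) ^ (Fintype.card K - 1) = -1 := by
  rw [Fintype.sum_equiv (Equiv.subRight c) (fun x => (x - c) ^ _) (· ^ _) fun _ => rfl,
    sum_pow_of_pos_of_le (Nat.sub_pos_of_lt Fintype.one_lt_card) le_rfl, if_pos rfl]

theorem surjective_of_sum_pow_eq {g : K → K}
    (h : ∀ N ∈ Icc 1 (Fintype.card K - 1), ∑ x, g x ^ N = ∑ x, x ^ N) :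
    Function.Surjective g := by
  intro c
  by_contra! hc
  have hle : ∀ k ≤ Fintype.card K - 1, ∑ x, g x ^ k = ∑ x, x ^ k := fun k hk => by
    rcases k.eq_zero_or_pos with rfl | hk0
    · simp
    · exact h k (mem_Icc.mpr ⟨hk0, hk⟩)
  have hmissed : ∑ x, (g x - c) ^ (Fintype.card K - 1) = 0 := by
    simp [pow_card_sub_one_eq_one _ (sub_ne_zero.mpr (hc _))]
  have := sum_add_pow_eq_of_sum_pow_eq hle (-c)
  simp_rw [← sub_eq_add_neg, hmissed, sum_sub_pow_card_sub_one] at this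
  exact one_ne_zero (neg_eq_zero.mp this.symm)

theorem bijective_iff_sum_pow_eq (g : K → K) :
    Function.Bijective g ↔ ∀ N ∈ Icc 1 (Fintype.card K - 1), ∑ x, g x ^ N = ∑ x, x ^ N :=
  ⟨fun hg _ _ => Fintype.sum_bijective g hg _ _ fun _ => rfl,
    fun h => Finite.surjective_iff_bijective.mp (surjective_of_sum_pow_eq h)⟩

theorem sum_pow_mul_pow_add_pow {r N : ℕ} (hrN : r * N ≠ 0) (s : ℕ) (a : K) :
    ∑ x : K, (x ^ r * (x ^ s + a)) ^ N =
      -∑ A ∈ (range (N + 1)).filter (fun A => Fintype.card K - 1 ∣ r * N + s * A),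
        (N.choose A : K) * a ^ (N - A) := by
  have expand : ∀ x : K, (x ^ r * (x ^ s + a)) ^ N
      = ∑ A ∈ range (N + 1), x ^ (r * N + s * A) * ((N.choose A : K) * a ^ (N - A)) := by
    intro x
    rw [mul_pow, ← pow_mul, add_pow, mul_sum]
    refine sum_congr rfl fun A _ => ?_
    rw [← pow_mul, pow_add]
    ring
  simp_rw [expand]
  rw [sum_comm, sum_filter, ← sum_neg_distrib]
  refine sum_congr rfl fun A _ => ?_
  rw [← sum_mul, sum_pow_of_ne_zero (by omega)]
  split_ifs <;> simp

end FiniteField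

theorem exists_int_eq_mul_sub_iff_dvd {q : ℕ} (hq : 1 ≤ q) (r s N A : ℕ) :
    (∃ j : ℤ, (A : ℤ) * s = j * ((q : ℤ) - 1) - r * N) ↔ q - 1 ∣ r * N + s * A := by
  rw [← Int.natCast_dvd_natCast, Nat.cast_sub hq]
  push_cast
  exact ⟨fun ⟨j, hj⟩ => ⟨j, by linear_combination hj⟩,
    fun ⟨j, hj⟩ => ⟨j, by linear_combination hj⟩⟩

open Classical in
theorem stmt_0_general {F : Type*} [Field F] [Fintype F] (Q : ℕ)
    (hQcard : Fintype.card F = Q)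
    (a : F) (r s : ℕ) (hr : 1 ≤ r) :
    Function.Bijective (fun x : F => x ^ r * (x ^ s + a)) ↔
      ∀ N ∈ Finset.Icc 1 (Q - 1),
        ∑ A ∈ (Finset.range (N + 1)).filter
            (fun A : ℕ => ∃ j : ℤ, (A : ℤ) * s = j * ((Q : ℤ) - 1) - (r : ℤ) * N),
          (N.choose A : F) * a ^ (N - A) = (if N = Q - 1 then 1 else 0) := by
  subst hQcard
  rw [FiniteField.bijective_iff_sum_pow_eq]
  refine forall₂_congr fun N hN => ?_
  obtain ⟨hN1, hN2⟩ := mem_Icc.mp hN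
  rw [FiniteField.sum_pow_of_pos_of_le hN1 hN2,
    FiniteField.sum_pow_mul_pow_add_pow (Nat.mul_pos hr hN1).ne',
    filter_congr fun A _ => exists_int_eq_mul_sub_iff_dvd Fintype.card_pos r s N A,
    neg_eq_iff_eq_neg]
  split_ifs <;> simp

open Classical in
/-- Permutation criterion for binomials `x^r (x^s + a)` over a finite field `F` with
`Q` elements (`Q ≥ 3`). -/
theorem stmt_0 {F : Type*} [Field F] [Fintype F] (Q : ℕ)
    (hQcard : Fintype.card F = Q) (hQ : 3 ≤ Q)
    (a : F) (ha : a ≠ 0) (r s : ℕ) (hr : 1 ≤ r) (hs : 1 ≤ s) :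
    Function.Bijective (fun x : F => x ^ r * (x ^ s + a)) ↔
      ∀ N ∈ Finset.Icc 1 (Q - 1),
        ∑ A ∈ (Finset.range (N + 1)).filter
            (fun A : ℕ => ∃ j : ℤ, (A : ℤ) * s = j * ((Q : ℤ) - 1) - (r : ℤ) * N),
          (N.choose A : F) * a ^ (N - A) = (if N = Q - 1 then 1 else 0) :=
  stmt_0_general Q hQcard a r s hr
end

section
/- Let q be a prime power, e ≥ 2, a ∈ F_{q^e} nonzero, and ℓ = q^{e−1} + ⋯ + q + 1. Let r and s be positive integers with r ≡ s (mod ℓ). Suppose that x^s(x^{q−1} + a) does not permute F_{q^e}, and that Σ_{A ∈ S_{N,s}} binom(N, A)·a^{N−A} ≠ 0 in F_{q^e} for some N ∈ {1, …, q^e − 2} with (q−1) | N. Then x^r(x^{q−1} + a) does not permute F_{q^e}. -/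
/-!
Hermite's criterion: if `f` permutes `F_{q^e}` then `∑ₓ f(x)^N = 0` for `0 < N < q^e - 1`.
Because `(q - 1) ∣ N` and `r ≡ s (mod ℓ)`, we get `rN ≡ sN (mod q^e - 1)`, so `f_r^N = f_s^N`
pointwise. Expanding `f_s(x)^N = x^{sN} (x^{q-1} + a)^N` binomially and summing over `x`, only the
monomials whose exponent is divisible by `q^e - 1` survive, each contributing `-1`; this leaves
exactly minus the sum over `S_{N,s}`, which therefore must vanish.
-/

open Finset

theorem Nat.mul_dvd_mul_add_iff_exists_int {ℓ d M A : ℕ} (hd : d ≠ 0) :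
    ℓ * d ∣ d * (M + A) ↔ ∃ j : ℤ, (A : ℤ) = j * ℓ - M := by
  rw [mul_comm ℓ, Nat.mul_dvd_mul_iff_left (Nat.pos_of_ne_zero hd), ← Int.natCast_dvd_natCast]
  push_cast
  exact exists_congr fun j => ⟨fun hj => by linarith, fun hj => by linarith⟩

namespace FiniteField

variable {K : Type*} [Field K] [Fintype K]

theorem sum_pow_eq_ite [DecidableEq K] {i : ℕ} (hi : i ≠ 0) :
    ∑ x : K, x ^ i = if Fintype.card K - 1 ∣ i then -1 else 0 := by
  rw [← sum_pow_units, ← Fintype.sum_subtype_add_sum_subtype (· ≠ (0 : K)),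
    ← Fintype.sum_equiv unitsEquivNeZero (fun x : Kˣ => (x : K) ^ i) _ fun _ => rfl]
  simpa using Fintype.sum_eq_zero _ fun x : {x : K // ¬x ≠ 0} => by simp [not_ne_iff.mp x.2, hi]

theorem sum_pow_mul_pow_add_pow_eq_neg_sum_choose (a : K) {s k N : ℕ} (hsN : s * N ≠ 0) :
    ∑ x : K, (x ^ s * (x ^ k + a)) ^ N =
      -∑ A ∈ (range (N + 1)).filter (fun A => Fintype.card K - 1 ∣ s * N + k * A),
        (N.choose A : K) * a ^ (N - A) := by
  classical
  calc ∑ x : K, (x ^ s * (x ^ k + a)) ^ N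
      = ∑ x : K, ∑ A ∈ range (N + 1), (N.choose A : K) * a ^ (N - A) * x ^ (s * N + k * A) := by
        refine sum_congr rfl fun x _ => ?_
        rw [mul_pow, ← pow_mul, add_pow, mul_sum]
        refine sum_congr rfl fun A _ => ?_
        ring
    _ = ∑ A ∈ range (N + 1), (N.choose A : K) * a ^ (N - A) * ∑ x : K, x ^ (s * N + k * A) := by
        rw [sum_comm]
        simp_rw [mul_sum]
    _ = _ := by
        simp_rw [sum_pow_eq_ite (add_ne_zero.mpr (Or.inl hsN)), mul_ite, mul_neg_one, mul_zero,
          sum_ite, sum_const_zero, add_zero, sum_neg_distrib]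

theorem pow_eq_pow_of_modEq {i j : ℕ} (hi : i ≠ 0) (hj : j ≠ 0)
    (h : i ≡ j [MOD Fintype.card K - 1]) (x : K) : x ^ i = x ^ j := by
  rcases eq_or_ne x 0 with rfl | hx
  · rw [zero_pow hi, zero_pow hj]
  · rw [pow_eq_pow_mod i (pow_card_sub_one_eq_one x hx),
      pow_eq_pow_mod j (pow_card_sub_one_eq_one x hx), h]

theorem sum_pow_eq_zero_of_bijective {f : K → K} (hf : f.Bijective) {N : ℕ}
    (hN : N < Fintype.card K - 1) : ∑ x, f x ^ N = 0 := by
  rw [Fintype.sum_bijective f hf _ (· ^ N) fun _ => rfl, sum_pow_lt_card_sub_one K N hN]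

end FiniteField

open Classical in
theorem stmt_2_general (q e : ℕ) {F : Type*} [Field F] [Fintype F] (hF : Fintype.card F = q ^ e)
    (a : F)
    (ℓ : ℕ) (hℓ : ℓ = ∑ i ∈ Finset.range e, q ^ i)
    (r s : ℕ) (hr : 1 ≤ r) (hs : 1 ≤ s) (hrs : r ≡ s [MOD ℓ])
    (hsum : ∃ N ∈ Finset.Icc 1 (q ^ e - 2), (q - 1) ∣ N ∧
      ∑ A ∈ (Finset.range (N + 1)).filter
          (fun A : ℕ => ∃ j : ℤ, (A : ℤ) = j * ℓ - ((s * N / (q - 1) : ℕ) : ℤ)),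
        (N.choose A : F) * a ^ (N - A) ≠ 0) :
    ¬ Function.Bijective (fun x : F => x ^ r * (x ^ (q - 1) + a)) := by
  obtain ⟨N, hN, ⟨c, hc⟩, hsum⟩ := hsum
  rw [mem_Icc] at hN
  have hq : q - 1 ≠ 0 := fun h => by simp [h] at hc; omega
  have hcard : Fintype.card F - 1 = ℓ * (q - 1) := by
    rw [hF, hℓ, geom_sum_mul_of_one_le (by omega)]
  have hpow (x : F) : (x ^ r * (x ^ (q - 1) + a)) ^ N = (x ^ s * (x ^ (q - 1) + a)) ^ N := by
    have hmod : r * N ≡ s * N [MOD Fintype.card F - 1] := by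
      rw [hcard, hc, ← mul_assoc, ← mul_assoc]
      exact (hrs.mul_right' (q - 1)).mul_right c
    rw [mul_pow, mul_pow, ← pow_mul, ← pow_mul,
      FiniteField.pow_eq_pow_of_modEq (mul_pos hr hN.1).ne' (mul_pos hs hN.1).ne' hmod]
  intro hbij
  have hzero := FiniteField.sum_pow_eq_zero_of_bijective hbij (N := N) (by omega)
  simp only [hpow, FiniteField.sum_pow_mul_pow_add_pow_eq_neg_sum_choose a (mul_pos hs hN.1).ne',
    neg_eq_zero] at hzero
  refine hsum (Eq.trans (sum_congr (filter_congr fun A _ => ?_) fun _ _ => rfl) hzero)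
  rw [hcard, hc, mul_left_comm, ← mul_add, Nat.mul_dvd_mul_add_iff_exists_int hq,
    Nat.mul_div_cancel_left _ (Nat.pos_of_ne_zero hq)]

open Classical in
/-- If `r ≡ s (mod ℓ)`, `x^s (x^{q-1} + a)` does not permute `F_{q^e}`, and the
binomial-coefficient sum over `S_{N,s}` is nonzero for some `N ∈ {1, …, q^e - 2}`
with `(q-1) ∣ N`, then `x^r (x^{q-1} + a)` does not permute `F_{q^e}`. -/
theorem stmt_2 (p m q e : ℕ) (hp : p.Prime) (hm : 0 < m) (hq : q = p ^ m)
    (he : 2 ≤ e) {F : Type*} [Field F] [Fintype F] (hF : Fintype.card F = q ^ e)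
    (a : F) (ha : a ≠ 0)
    (ℓ : ℕ) (hℓ : ℓ = ∑ i ∈ Finset.range e, q ^ i)
    (r s : ℕ) (hr : 1 ≤ r) (hs : 1 ≤ s) (hrs : r ≡ s [MOD ℓ])
    (hnotperm : ¬ Function.Bijective (fun x : F => x ^ s * (x ^ (q - 1) + a)))
    (hsum : ∃ N ∈ Finset.Icc 1 (q ^ e - 2), (q - 1) ∣ N ∧
      ∑ A ∈ (Finset.range (N + 1)).filter
          (fun A : ℕ => ∃ j : ℤ, (A : ℤ) = j * ℓ - ((s * N / (q - 1) : ℕ) : ℤ)),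
        (N.choose A : F) * a ^ (N - A) ≠ 0) :
    ¬ Function.Bijective (fun x : F => x ^ r * (x ^ (q - 1) + a)) :=
  stmt_2_general q e hF a ℓ hℓ r s hr hs hrs hsum
end

section
/- Let q = p^m where p is prime and m ≥ 1, and let k be an integer with 0 ≤ k ≤ q − 1. Then p divides the binomial coefficient binom(q−2, k) if and only if k ≡ p − 1 (mod p). -/
/-!
Write `p ^ m - 2 = p * (p ^ (m - 1) - 1) + (p - 2)` in base `p`. By Lucas's theorem, `p` divides
`binom(p ^ m - 2, k)` iff it divides `binom(p - 2, k % p)` or `binom(p ^ (m - 1) - 1, k / p)`.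
All base-`p` digits of `p ^ (m - 1) - 1` equal `p - 1`, so the second coefficient is never
divisible by `p`, while the first is divisible exactly when `k % p > p - 2`, i.e. `k % p = p - 1`.
-/

namespace Nat

theorem pow_succ_sub_eq_mul_add {p c : ℕ} (hc : c ≤ p) (m : ℕ) :
    p ^ (m + 1) - c = p * (p ^ m - 1) + (p - c) := by
  rcases Nat.eq_zero_or_pos p with rfl | hp
  · simp_all
  · have : 1 ≤ p ^ m := Nat.one_le_pow _ _ hp
    rw [pow_succ]
    zify [hc, this, hc.trans (Nat.le_mul_of_pos_left p this)]
    ring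

namespace Prime

variable {p : ℕ}

theorem dvd_choose_iff_lt_of_lt (hp : p.Prime) {n r : ℕ} (hn : n < p) :
    p ∣ n.choose r ↔ n < r := by
  constructor
  · intro h
    by_contra! hr
    exact (hp.coprime_iff_not_dvd.mp (hp.coprime_choose_of_lt hn hr)) h
  · intro hr
    rw [Nat.choose_eq_zero_of_lt hr]
    exact dvd_zero p

theorem dvd_choose_mul_add_iff (hp : p.Prime) {a b : ℕ} (hb : b < p) (k : ℕ) :
    p ∣ (p * a + b).choose k ↔ p ∣ b.choose (k % p) ∨ p ∣ a.choose (k / p) := by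
  have := Fact.mk hp
  have lucas := Choose.choose_modEq_choose_mod_mul_choose_div_nat (n := p * a + b) (k := k) (p := p)
  rw [Nat.mul_add_mod, Nat.mod_eq_of_lt hb, Nat.mul_add_div hp.pos, Nat.div_eq_of_lt hb,
    add_zero] at lucas
  rw [lucas.dvd_iff dvd_rfl, hp.dvd_mul]

theorem not_dvd_choose_pow_sub_one (hp : p.Prime) (t : ℕ) {j : ℕ} (hj : j < p ^ t) :
    ¬ p ∣ (p ^ t - 1).choose j := by
  induction t generalizing j with
  | zero =>
    obtain rfl : j = 0 := by simpa using hj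
    simpa using hp.one_lt.ne'
  | succ t ih =>
    have := hp.two_le
    have := Nat.mod_lt j hp.pos
    rw [pow_succ_sub_eq_mul_add hp.one_le, hp.dvd_choose_mul_add_iff (by omega), not_or,
      hp.dvd_choose_iff_lt_of_lt (by omega)]
    refine ⟨by omega, ih ?_⟩
    rwa [Nat.div_lt_iff_lt_mul hp.pos, ← pow_succ]

end Prime

end Nat

/-- For `q = p^m` (`p` prime, `m ≥ 1`) and `0 ≤ k ≤ q - 1`, `p` divides the binomial
coefficient `binom(q-2, k)` if and only if `k ≡ p - 1 (mod p)`. -/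
theorem stmt_4 (p m k : ℕ) (hp : p.Prime) (hm : 1 ≤ m) (hk : k ≤ p ^ m - 1) :
    p ∣ Nat.choose (p ^ m - 2) k ↔ k ≡ p - 1 [MOD p] := by
  obtain ⟨m, rfl⟩ : ∃ m', m = m' + 1 := ⟨m - 1, by omega⟩
  have hp2 := hp.two_le
  have hk_div : k / p < p ^ m := by
    rw [Nat.div_lt_iff_lt_mul hp.pos, ← pow_succ]
    have := Nat.one_le_pow (m + 1) p hp.pos
    omega
  have hk_mod : k % p < p := Nat.mod_lt k hp.pos
  rw [Nat.pow_succ_sub_eq_mul_add hp2, hp.dvd_choose_mul_add_iff (by omega),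
    or_iff_left (hp.not_dvd_choose_pow_sub_one m hk_div), hp.dvd_choose_iff_lt_of_lt (by omega),
    Nat.ModEq, Nat.mod_eq_of_lt (by omega : p - 1 < p)]
  omega
end

section
/- Let q be a prime power, e ≥ 2, a ∈ F_{q^e} nonzero, and h a positive integer. Then the linearized binomial L(x) = x^{q^h} + a·x permutes F_{q^e} if and only if (−a)^{(q^e−1)/(q^d−1)} ≠ 1, where d = gcd(e, h). -/
/-!
Since `q` is a power of the characteristic, `L(x) = x^{q^h} + a x` is additive, so it is bijective
iff its kernel is trivial, i.e. iff `-a` is not a `(q^h - 1)`-th power in `F^×`. In the cyclic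
group `F^×` of order `n = q^e - 1` the `k`-th powers are exactly the elements killed by
`n / gcd(n, k)`, and `gcd(q^e - 1, q^h - 1) = q^{gcd(e, h)} - 1`.
-/

-- Both subgroups have order `n / gcd(n, k)`, so the inclusion `range ≤ ker` is an equality.
theorem IsCyclic.range_powMonoidHom_eq_ker {G : Type*} [CommGroup G] [IsCyclic G] [Finite G]
    (k : ℕ) :
    (powMonoidHom k : G →* G).range =
      (powMonoidHom (Nat.card G / (Nat.card G).gcd k)).ker := by
  set n := Nat.card G
  have hdvd : n ∣ k * (n / n.gcd k) := by
    conv_lhs => rw [← Nat.div_mul_cancel (Nat.gcd_dvd_left n k)]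
    rw [mul_comm k]
    exact Nat.mul_dvd_mul_left _ (Nat.gcd_dvd_right n k)
  refine Subgroup.eq_of_le_of_card_ge ?_ ?_
  · rintro _ ⟨x, rfl⟩
    obtain ⟨c, hc⟩ := hdvd
    rw [MonoidHom.mem_ker, powMonoidHom_apply, powMonoidHom_apply, ← pow_mul, hc, pow_mul,
      pow_card_eq_one', one_pow]
  · rw [IsCyclic.card_powMonoidHom_ker, IsCyclic.card_powMonoidHom_range,
      Nat.gcd_eq_right (Nat.div_dvd_of_dvd (Nat.gcd_dvd_left n k))]

theorem IsCyclic.exists_pow_eq_iff {G : Type*} [CommGroup G] [IsCyclic G] [Finite G]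
    (k : ℕ) (b : G) :
    (∃ x : G, x ^ k = b) ↔ b ^ (Nat.card G / (Nat.card G).gcd k) = 1 := by
  simpa using SetLike.ext_iff.mp (IsCyclic.range_powMonoidHom_eq_ker (G := G) k) b

theorem FiniteField.exists_pow_eq_iff {F : Type*} [Field F] [Finite F] (k : ℕ) {b : F}
    (hb : b ≠ 0) :
    (∃ x : F, x ≠ 0 ∧ x ^ k = b) ↔ b ^ ((Nat.card F - 1) / (Nat.card F - 1).gcd k) = 1 := by
  have hunits := IsCyclic.exists_pow_eq_iff k (Units.mk0 b hb)
  rw [Nat.card_units] at hunits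
  simp only [← Units.val_inj, Units.val_pow_eq_pow_val, Units.val_mk0, Units.val_one] at hunits
  rw [← hunits]
  exact ⟨fun ⟨x, hx0, hx⟩ => ⟨Units.mk0 x hx0, hx⟩, fun ⟨x, hx⟩ => ⟨x, x.ne_zero, hx⟩⟩

theorem FiniteField.exists_charP_eq_pow_of_card_eq_pow {F : Type*} [Field F] [Fintype F]
    {q e : ℕ} (hF : Fintype.card F = q ^ e) : ∃ p i : ℕ, p.Prime ∧ CharP F p ∧ q = p ^ i := by
  obtain ⟨p, hchar, n, hp, hcard⟩ := FiniteField.card' F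
  have he : e ≠ 0 := by
    rintro rfl
    exact (Fintype.one_lt_card (α := F)).ne' (by rw [hF, pow_zero])
  have hq : q ∣ p ^ (n : ℕ) := hcard ▸ hF ▸ dvd_pow_self q he
  obtain ⟨i, -, hi⟩ := (Nat.dvd_prime_pow hp).mp hq
  exact ⟨p, i, hp, hchar, hi⟩

theorem bijective_pow_add_mul_iff {F : Type*} [Field F] [Finite F] {k : ℕ}
    (hadd : ∀ x y : F, (x + y) ^ k = x ^ k + y ^ k) (a : F) :
    Function.Bijective (fun x : F => x ^ k + a * x) ↔ ¬∃ x : F, x ≠ 0 ∧ x ^ (k - 1) = -a := by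
  have hk : k ≠ 0 := by
    rintro rfl
    simpa using hadd 0 0
  let L : F →+ F := .mk' (fun x => x ^ k + a * x) fun x y => by simp only [hadd]; ring
  have hsplit (x : F) : x ^ k + a * x = (x ^ (k - 1) + a) * x := by
    rw [add_mul, ← pow_succ, Nat.sub_add_cancel (Nat.one_le_iff_ne_zero.mpr hk)]
  rw [← Finite.injective_iff_bijective, show (fun x : F => x ^ k + a * x) = L from rfl,
    injective_iff_map_eq_zero]
  simp only [L, AddMonoidHom.mk'_apply, hsplit, mul_eq_zero, add_eq_zero_iff_eq_neg]
  constructor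
  · rintro h ⟨x, hx0, hx⟩
    exact hx0 (h x (.inl hx))
  · intro h x hx
    by_contra hx0
    exact h ⟨x, hx0, hx.resolve_right hx0⟩

theorem stmt_5_general (q e h : ℕ)
    {F : Type*} [Field F] [Fintype F] (hF : Fintype.card F = q ^ e)
    (a : F) (ha : a ≠ 0) :
    Function.Bijective (fun x : F => x ^ q ^ h + a * x) ↔
      (-a) ^ ((q ^ e - 1) / (q ^ Nat.gcd e h - 1)) ≠ 1 := by
  obtain ⟨p, i, hp, _, hq⟩ := FiniteField.exists_charP_eq_pow_of_card_eq_pow hF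
  have := Fact.mk hp
  have hadd (x y : F) : (x + y) ^ q ^ h = x ^ q ^ h + y ^ q ^ h := by
    rw [hq, ← pow_mul]
    exact add_pow_char_pow ..
  rw [bijective_pow_add_mul_iff hadd, FiniteField.exists_pow_eq_iff _ (neg_ne_zero.mpr ha),
    Nat.card_eq_fintype_card, hF, Nat.pow_sub_one_gcd_pow_sub_one]

/-- The linearized binomial `L(x) = x^{q^h} + a x` permutes `F_{q^e}` if and only if
`(-a)^{(q^e - 1)/(q^d - 1)} ≠ 1`, where `d = gcd(e, h)`. -/
theorem stmt_5 (p m q e h : ℕ) (hp : p.Prime) (hm : 0 < m) (hq : q = p ^ m)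
    (he : 2 ≤ e) (hh : 0 < h)
    {F : Type*} [Field F] [Fintype F] (hF : Fintype.card F = q ^ e)
    (a : F) (ha : a ≠ 0) :
    Function.Bijective (fun x : F => x ^ q ^ h + a * x) ↔
      (-a) ^ ((q ^ e - 1) / (q ^ Nat.gcd e h - 1)) ≠ 1 :=
  stmt_5_general q e h hF a ha
end

section
/- Let q ≥ 2 be a prime power, e ≥ 2, h a positive integer, r an integer, and ℓ = q^{e−1} + ⋯ + q + 1. Then r(q^h − 1) − q + 1 ≡ 0 (mod q^e − 1) if and only if gcd(h, e) = 1 and there exists an integer s such that r ≡ s·ℓ + Σ_{i=0}^{k−1} q^{h·i} (mod q^e − 1), where k is the unique integer in {1, …, e−1} with h·k ≡ 1 (mod e). -/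
/-!
Put `T = ∑_{i<k} q^{hi}`. Then `T (q^h - 1) = q^{hk} - 1 ≡ q - 1` modulo `q^e - 1`, so `T` is a
particular solution of `r (q^h - 1) ≡ q - 1`. For the homogeneous congruence, multiplying by
`q^h - 1` acts like multiplying by `q - 1`, and `(q - 1) ℓ = q^e - 1`, so its solutions are the
multiples of `ℓ`. Conversely, `q^{gcd(h,e)} - 1` divides both `q^h - 1` and `q^e - 1`, hence `q - 1`,
which forces `gcd(h, e) = 1`.
-/

open Finset

section CommRing

variable {R : Type*} [CommRing R]

theorem pow_sub_one_dvd_pow_sub_pow_mod (x : R) (e a : ℕ) : x ^ e - 1 ∣ x ^ a - x ^ (a % e) := by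
  have hsplit : x ^ a - x ^ (a % e) = ((x ^ e) ^ (a / e) - 1) * x ^ (a % e) := by
    rw [← pow_mul, sub_one_mul, ← pow_add, Nat.div_add_mod]
  rw [hsplit]
  exact (sub_one_dvd_pow_sub_one _ _).mul_right _

theorem pow_sub_one_dvd_pow_sub_pow_of_modEq (x : R) {e a b : ℕ} (hab : a ≡ b [MOD e]) :
    x ^ e - 1 ∣ x ^ a - x ^ b := by
  have hsplit : x ^ a - x ^ b = (x ^ a - x ^ (a % e)) - (x ^ b - x ^ (b % e)) := by
    rw [show a % e = b % e from hab]; ring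
  rw [hsplit]
  exact (pow_sub_one_dvd_pow_sub_pow_mod x e a).sub (pow_sub_one_dvd_pow_sub_pow_mod x e b)

/-- Multiplying by `∑_{i<k} x^{hi}` turns `x ^ h - 1` into `x ^ (h * k) - 1 ≡ x - 1`. -/
theorem pow_sub_one_dvd_mul_pow_sub_one_iff (x y : R) {e h k : ℕ} (hk : h * k ≡ 1 [MOD e]) :
    x ^ e - 1 ∣ y * (x ^ h - 1) ↔ x ^ e - 1 ∣ y * (x - 1) := by
  constructor
  · intro hdvd
    have hmul : y * (x ^ h - 1) ∣ y * (x ^ (h * k) - 1) :=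
      mul_dvd_mul_left y (pow_one_sub_dvd_pow_mul_sub_one x h k)
    have hsplit : y * (x - 1) = y * (x ^ (h * k) - 1) - y * (x ^ (h * k) - x ^ 1) := by ring
    rw [hsplit]
    exact (hdvd.trans hmul).sub ((pow_sub_one_dvd_pow_sub_pow_of_modEq x hk).mul_left y)
  · intro hdvd
    exact hdvd.trans (mul_dvd_mul_left y (sub_one_dvd_pow_sub_one x h))

end CommRing

theorem pow_sub_one_dvd_mul_pow_sub_one_sub_iff {R : Type*} [CommRing R] [IsDomain R]
    {q : R} (hq : q ≠ 1) (r : R) {e h k : ℕ} (hk : h * k ≡ 1 [MOD e]) :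
    q ^ e - 1 ∣ r * (q ^ h - 1) - (q - 1) ↔
      ∑ i ∈ range e, q ^ i ∣ r - ∑ i ∈ range k, q ^ (h * i) := by
  set T := ∑ i ∈ range k, q ^ (h * i)
  have hT : T * (q ^ h - 1) = q ^ (h * k) - 1 := by
    simp only [T, pow_mul]; exact geom_sum_mul _ _
  have hsplit : r * (q ^ h - 1) - (q - 1) = (r - T) * (q ^ h - 1) + (q ^ (h * k) - q ^ 1) := by
    rw [sub_mul, hT]; ring
  rw [hsplit, dvd_add_left (pow_sub_one_dvd_pow_sub_pow_of_modEq q hk),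
    pow_sub_one_dvd_mul_pow_sub_one_iff q _ hk, ← geom_sum_mul,
    mul_dvd_mul_iff_right (sub_ne_zero.2 hq)]

theorem Int.exists_modEq_mul_add_iff {a m : ℤ} (ham : a ∣ m) (r t : ℤ) :
    (∃ s : ℤ, r ≡ s * a + t [ZMOD m]) ↔ a ∣ r - t := by
  constructor
  · rintro ⟨s, hs⟩
    rw [show r - t = s * a - (s * a + t - r) by ring]
    exact (dvd_mul_left a s).sub (ham.trans hs.dvd)
  · rintro ⟨s, hs⟩
    exact ⟨s, by rw [mul_comm, ← hs, sub_add_cancel]⟩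

theorem Int.gcd_eq_one_of_pow_sub_one_dvd {q : ℤ} (hq : 1 < q) {e h : ℕ} {r : ℤ}
    (hdvd : q ^ e - 1 ∣ r * (q ^ h - 1) - (q - 1)) : Nat.gcd h e = 1 := by
  set d := Nat.gcd h e
  have hdh : q ^ d - 1 ∣ q ^ h - 1 := by
    obtain ⟨t, ht⟩ := Nat.gcd_dvd_left h e
    rw [ht]; exact pow_one_sub_dvd_pow_mul_sub_one q d t
  have hde : q ^ d - 1 ∣ q ^ e - 1 := by
    obtain ⟨t, ht⟩ := Nat.gcd_dvd_right h e
    rw [ht]; exact pow_one_sub_dvd_pow_mul_sub_one q d t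
  have hd : q ^ d - 1 ∣ q - 1 := by
    simpa using (hdh.mul_left r).sub (hde.trans hdvd)
  have hd0 : d ≠ 0 := by
    rintro hd0
    rw [hd0, pow_zero, sub_self, zero_dvd_iff] at hd
    omega
  have hd1 : q ^ d ≤ q ^ 1 := by
    have := Int.le_of_dvd (by omega) hd
    rw [pow_one]; omega
  have := (pow_le_pow_iff_right₀ hq).1 hd1
  omega

theorem stmt_7_general (p m q e h : ℕ) (hp : p.Prime) (hm : 0 < m) (hq : q = p ^ m)
    (he : 2 ≤ e) (r : ℤ)
    (ℓ : ℕ) (hℓ : ℓ = ∑ i ∈ Finset.range e, q ^ i) :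
    ((q : ℤ) ^ e - 1) ∣ (r * ((q : ℤ) ^ h - 1) - q + 1) ↔
      (Nat.gcd h e = 1 ∧ ∃ k : ℕ, 1 ≤ k ∧ k ≤ e - 1 ∧ h * k ≡ 1 [MOD e] ∧
        ∃ s : ℤ,
          r ≡ s * ℓ + ∑ i ∈ Finset.range k, (q : ℤ) ^ (h * i) [ZMOD ((q : ℤ) ^ e - 1)]) := by
  have hq1 : 1 < (q : ℤ) := by
    subst hq; exact_mod_cast Nat.one_lt_pow hm.ne' hp.one_lt
  have hℓ_dvd : (ℓ : ℤ) ∣ (q : ℤ) ^ e - 1 := by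
    rw [hℓ, ← geom_sum_mul]; push_cast; exact dvd_mul_right _ _
  have hsolve : ∀ k, h * k ≡ 1 [MOD e] →
      (((q : ℤ) ^ e - 1) ∣ (r * ((q : ℤ) ^ h - 1) - q + 1) ↔
        ∃ s : ℤ, r ≡ s * ℓ + ∑ i ∈ range k, (q : ℤ) ^ (h * i) [ZMOD ((q : ℤ) ^ e - 1)]) := by
    intro k hk
    rw [sub_add, Int.exists_modEq_mul_add_iff hℓ_dvd,
      pow_sub_one_dvd_mul_pow_sub_one_sub_iff hq1.ne' r hk, hℓ]
    push_cast; rfl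
  constructor
  · intro hdvd
    have hgcd : Nat.gcd h e = 1 := Int.gcd_eq_one_of_pow_sub_one_dvd hq1 (by rwa [← sub_add])
    obtain ⟨k, hke, hk⟩ := Nat.exists_mul_mod_eq_one_of_coprime hgcd (by omega)
    have hk0 : k ≠ 0 := by rintro rfl; simp at hk
    have hk' : h * k ≡ 1 [MOD e] := by rw [Nat.ModEq, hk, Nat.mod_eq_of_lt (by omega)]
    exact ⟨hgcd, k, by omega, by omega, hk', (hsolve k hk').1 hdvd⟩
  · rintro ⟨-, k, -, -, hk, hs⟩
    exact (hsolve k hk).2 hs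

/-- `r(q^h - 1) - q + 1 ≡ 0 (mod q^e - 1)` if and only if `gcd(h, e) = 1` and
`r ≡ sℓ + Σ_{i=0}^{k-1} q^{hi} (mod q^e - 1)` for some integer `s`, where `k` is the
unique integer in `{1, …, e-1}` with `hk ≡ 1 (mod e)` and `ℓ = q^{e-1} + ⋯ + q + 1`. -/
theorem stmt_7 (p m q e h : ℕ) (hp : p.Prime) (hm : 0 < m) (hq : q = p ^ m)
    (he : 2 ≤ e) (hh : 0 < h) (r : ℤ)
    (ℓ : ℕ) (hℓ : ℓ = ∑ i ∈ Finset.range e, q ^ i) :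
    ((q : ℤ) ^ e - 1) ∣ (r * ((q : ℤ) ^ h - 1) - q + 1) ↔
      (Nat.gcd h e = 1 ∧ ∃ k : ℕ, 1 ≤ k ∧ k ≤ e - 1 ∧ h * k ≡ 1 [MOD e] ∧
        ∃ s : ℤ,
          r ≡ s * ℓ + ∑ i ∈ Finset.range k, (q : ℤ) ^ (h * i) [ZMOD ((q : ℤ) ^ e - 1)]) :=
  stmt_7_general p m q e h hp hm hq he r ℓ hℓ
end

section
/- Let q be a prime power, e ≥ 2, a ∈ F_{q^e} nonzero, r ≥ 1, f(x) = x^r(x^{q−1} + a), and ℓ = q^{e−1} + ⋯ + q + 1. Then the following two conditions are equivalent: (1) f permutes F_{q^e} and there exists a positive integer h such that f(x) = x^{r·q^h} + a·x^r for all x ∈ F_{q^e} (i.e., f is congruent modulo x^{q^e} − x to the composition of the linearized binomial L(x) = x^{q^h} + a·x with the monomial x^r); (2) (−a)^ℓ ≠ 1, gcd(r, q−1) = 1, and there exist a positive integer h with gcd(h, e) = 1 and a positive integer s such that r ≡ s·ℓ + Σ_{i=0}^{k−1} q^{h·i} (mod q^e − 1), where k is the unique integer in {1, …, e−1} with h·k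 ≡ 1 (mod e). -/
/-!
Write `f = L ∘ (x ↦ x ^ r)` with `L y = y ^ q ^ h + a * y`. Since `Fˣ` is cyclic of order
`N = q ^ e - 1`, the identity `f x = x ^ (r * q ^ h) + a * x ^ r` is the congruence
`r + (q - 1) ≡ r * q ^ h [MOD N]`. Any common divisor of `N` and `q ^ h - 1` (or of `N` and `r`)
then divides `q - 1`, which forces `gcd h e = 1` (and `gcd r N = gcd r (q - 1)`). For `h * k ≡ 1`
modulo `e`, the sum `S = ∑_{i<k} q^{hi}` satisfies `S (q ^ h - 1) = q ^ (h k) - 1 ≡ q - 1`, and as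
`gcd (q ^ h - 1) N = q - 1` the congruence is equivalent to `r ≡ S [MOD ℓ]`.
Finally `f` is bijective iff `x ↦ x ^ r` and the additive map `L` are; `L` has a nonzero kernel
iff `-a` is a `(q ^ h - 1)`-th power, i.e. a `(q - 1)`-th power, i.e. iff `(-a) ^ ℓ = 1`.
-/

open Finset Function

namespace Nat

theorem pow_modEq_pow_mod {q : ℕ} (hq : 0 < q) (a e : ℕ) : q ^ a ≡ q ^ (a % e) [MOD q ^ e - 1] :=
  calc q ^ a = q ^ (a % e) * (q ^ e) ^ (a / e) := by rw [← pow_mul, ← pow_add, mod_add_div]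
    _ ≡ q ^ (a % e) * 1 ^ (a / e) [MOD q ^ e - 1] :=
      ((modEq_sub (one_le_pow e q hq)).pow _).mul_left _
    _ = q ^ (a % e) := by rw [one_pow, mul_one]

theorem pow_modEq_pow_of_modEq {q e a b : ℕ} (hq : 0 < q) (h : a ≡ b [MOD e]) :
    q ^ a ≡ q ^ b [MOD q ^ e - 1] := by
  have hab : a % e = b % e := h
  exact (pow_modEq_pow_mod hq a e).trans (hab ▸ (pow_modEq_pow_mod hq b e).symm)

theorem sum_pow_mul_mul_pow_sub_one_modEq {q e h k : ℕ} (hq : 0 < q) (hk : h * k ≡ 1 [MOD e]) :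
    (∑ i ∈ range k, q ^ (h * i)) * (q ^ h - 1) ≡ q - 1 [MOD q ^ e - 1] := by
  have hgeom : (∑ i ∈ range k, q ^ (h * i)) * (q ^ h - 1) + 1 = q ^ (h * k) := by
    simp_rw [pow_mul]
    rw [geom_sum_mul_of_one_le (one_le_pow h q hq),
      Nat.sub_add_cancel (one_le_pow k _ (one_le_pow h q hq))]
  refine ModEq.add_right_cancel' 1 ?_
  rw [hgeom, Nat.sub_add_cancel hq]
  simpa using pow_modEq_pow_of_modEq hq hk

theorem dvd_sub_one_of_add_sub_one_modEq_mul_pow {q e r h D : ℕ} (hD : D ∣ q ^ e - 1)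
    (hc : r + (q - 1) ≡ r * q ^ h [MOD q ^ e - 1]) (hr : r * q ^ h ≡ r [MOD D]) : D ∣ q - 1 := by
  refine (modEq_zero_iff_dvd).1 (ModEq.add_left_cancel' r ?_)
  simpa using (hc.of_dvd hD).trans hr

theorem coprime_of_add_sub_one_modEq_mul_pow {q e r h : ℕ} (hq : 1 < q) (he : e ≠ 0)
    (hc : r + (q - 1) ≡ r * q ^ h [MOD q ^ e - 1]) : h.Coprime e := by
  have hgcd := pow_sub_one_gcd_pow_sub_one q h e
  have hqh : q ^ h ≡ 1 [MOD q ^ gcd h e - 1] :=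
    ((modEq_iff_dvd' (one_le_pow h q (by omega))).2 (hgcd ▸ gcd_dvd_left _ _)).symm
  have hD := dvd_sub_one_of_add_sub_one_modEq_mul_pow (hgcd ▸ gcd_dvd_right _ _) hc
    (by simpa using hqh.mul_left r)
  have hle : q ^ gcd h e ≤ q ^ 1 := by
    have := le_of_dvd (by omega) hD
    have := one_le_pow (gcd h e) q (by omega)
    rw [pow_one]; omega
  exact le_antisymm ((pow_le_pow_iff_right₀ hq).1 hle) (gcd_pos_of_pos_right h (pos_of_ne_zero he))

theorem Coprime.pow_sub_one_of_add_sub_one_modEq_mul_pow {q e r h : ℕ} (hr : r.Coprime (q - 1))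
    (hc : r + (q - 1) ≡ r * q ^ h [MOD q ^ e - 1]) : r.Coprime (q ^ e - 1) := by
  have hr0 : r ≡ 0 [MOD gcd r (q ^ e - 1)] := modEq_zero_iff_dvd.2 (gcd_dvd_left _ _)
  have hD := dvd_sub_one_of_add_sub_one_modEq_mul_pow (gcd_dvd_right r _) hc
    (ModEq.trans (by simpa using hr0.mul_right (q ^ h)) hr0.symm)
  have := dvd_gcd (gcd_dvd_left r _) hD
  rwa [hr.gcd_eq_one, Nat.dvd_one] at this

theorem add_sub_one_modEq_mul_pow_iff {q e r h k : ℕ} (hq : 1 < q) (he : e ≠ 0)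
    (hk : h * k ≡ 1 [MOD e]) :
    r + (q - 1) ≡ r * q ^ h [MOD q ^ e - 1] ↔
      r ≡ ∑ i ∈ range k, q ^ (h * i) [MOD ∑ i ∈ range e, q ^ i] := by
  set S := ∑ i ∈ range k, q ^ (h * i)
  set ℓ := ∑ i ∈ range e, q ^ i
  have hℓ : ℓ * (q - 1) = q ^ e - 1 := geom_sum_mul_of_one_le hq.le e
  have hhe : h.Coprime e := Coprime.coprime_mul_right (by simpa using hk.gcd_eq)
  have hgcd : gcd (q ^ e - 1) (q ^ h - 1) = q - 1 := by
    rw [pow_sub_one_gcd_pow_sub_one, gcd_comm, hhe, pow_one]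
  have hsplit : r * q ^ h = r * (q ^ h - 1) + r := by
    rw [Nat.mul_sub, mul_one, Nat.sub_add_cancel (Nat.le_mul_of_pos_right r (by positivity))]
  calc r + (q - 1) ≡ r * q ^ h [MOD q ^ e - 1]
      ↔ r * (q ^ h - 1) ≡ S * (q ^ h - 1) [MOD q ^ e - 1] := by
        have hS := sum_pow_mul_mul_pow_sub_one_modEq (q := q) (by omega) hk
        rw [hsplit, add_comm (r * _)]
        exact ⟨fun h' => (ModEq.add_left_cancel' r h').symm.trans hS.symm,
          fun h' => ModEq.add_left r (h'.trans hS).symm⟩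
    _ ↔ r ≡ S [MOD ℓ] := by
      constructor
      · intro hrS
        have := hrS.cancel_right_div_gcd (by have := one_lt_pow he hq; omega)
        rwa [hgcd, ← hℓ, Nat.mul_div_cancel _ (by omega)] at this
      · intro hrS
        exact (hrS.mul_right' _).of_dvd (hℓ ▸ mul_dvd_mul_left ℓ (sub_one_dvd_pow_sub_one q h))

theorem modEq_iff_exists_pos_mul_add {r S n c : ℕ} (hn : 0 < n) (hc : 0 < c) :
    r ≡ S [MOD n] ↔ ∃ s, 0 < s ∧ r ≡ s * n + S [MOD n * c] := by
  constructor
  · intro hrS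
    -- shift `r` by a multiple of `n * c` so that it exceeds `S` by at least `n`
    set x := r + n * c * (S + 1)
    have hxr : x ≡ r [MOD n * c] := by simp [x, ModEq]
    have hSx : S + n ≤ x := calc
      S + n ≤ n * (S + 1) := by nlinarith
      _ ≤ n * c * (S + 1) := Nat.mul_le_mul_right _ (Nat.le_mul_of_pos_right n hc)
      _ ≤ x := Nat.le_add_left _ _
    obtain ⟨s, hs⟩ : n ∣ x - S :=
      (modEq_iff_dvd' (by omega)).1 (hrS.symm.trans ((hxr.of_mul_right c).symm))
    have hx : s * n + S = x := by rw [mul_comm, ← hs, Nat.sub_add_cancel (by omega)]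
    refine ⟨s, ?_, hx ▸ hxr.symm⟩
    rcases Nat.eq_zero_or_pos s with rfl | hs0
    · omega
    · exact hs0
  · rintro ⟨s, -, hrs⟩
    exact (hrs.of_mul_right c).trans (by simp [ModEq])

theorem exists_mul_modEq_one_of_coprime {h e : ℕ} (he : 2 ≤ e) (hhe : h.Coprime e) :
    ∃ k, 1 ≤ k ∧ k ≤ e - 1 ∧ h * k ≡ 1 [MOD e] := by
  obtain ⟨k, hke, hk⟩ := exists_mul_mod_eq_one_of_coprime hhe (by omega)
  refine ⟨k, Nat.pos_of_ne_zero ?_, by omega, by rw [ModEq, hk, mod_eq_of_lt (by omega)]⟩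
  rintro rfl
  simp at hk

end Nat

theorem Finite.bijective_comp_iff {α : Type*} [Finite α] {f g : α → α} :
    Bijective (f ∘ g) ↔ Bijective f ∧ Bijective g :=
  ⟨fun h => ⟨Finite.surjective_iff_bijective.1 h.surjective.of_comp,
    Finite.injective_iff_bijective.1 h.injective.of_comp⟩, fun h => h.1.comp h.2⟩

theorem IsCyclic.forall_pow_eq_pow_iff {G : Type*} [Group G] [Finite G] [IsCyclic G] {m n : ℕ} :
    (∀ g : G, g ^ m = g ^ n) ↔ m ≡ n [MOD Nat.card G] := by
  obtain ⟨g, hg⟩ := IsCyclic.exists_ofOrder_eq_natCard (α := G)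
  exact ⟨fun h => hg ▸ pow_eq_pow_iff_modEq.1 (h g),
    fun h x => pow_eq_pow_iff_modEq.2 (h.of_dvd (orderOf_dvd_natCard x))⟩

theorem IsCyclic.range_powMonoidHom {G : Type*} [CommGroup G] [Finite G] [IsCyclic G] (d : ℕ) :
    (powMonoidHom d : G →* G).range =
      (powMonoidHom (Nat.card G / (Nat.card G).gcd d) : G →* G).ker := by
  refine Subgroup.eq_of_le_of_card_ge ?_ ?_
  · rintro _ ⟨g, rfl⟩
    have hdvd : Nat.card G ∣ d * (Nat.card G / (Nat.card G).gcd d) := by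
      rw [← Nat.mul_div_assoc _ (Nat.gcd_dvd_left _ _), Nat.gcd_comm]
      exact dvd_lcm_right d (Nat.card G)
    rw [MonoidHom.mem_ker, powMonoidHom_apply, powMonoidHom_apply, ← pow_mul,
      ← orderOf_dvd_iff_pow_eq_one]
    exact (orderOf_dvd_natCard g).trans hdvd
  · rw [card_powMonoidHom_range, card_powMonoidHom_ker,
      Nat.gcd_eq_right (Nat.div_dvd_of_dvd (Nat.gcd_dvd_left _ _))]

section GroupWithZero

variable {G₀ : Type*} [GroupWithZero G₀] {m n : ℕ}

theorem forall_pow_eq_pow_iff_units (hm : m ≠ 0) (hn : n ≠ 0) :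
    (∀ x : G₀, x ^ m = x ^ n) ↔ ∀ u : G₀ˣ, u ^ m = u ^ n := by
  refine ⟨fun h u => Units.ext (by simpa using h u), fun h x => ?_⟩
  rcases eq_or_ne x 0 with rfl | hx
  · rw [zero_pow hm, zero_pow hn]
  · simpa using congrArg Units.val (h (Units.mk0 x hx))

theorem pow_injective_iff_units (hn : n ≠ 0) :
    Injective (fun x : G₀ => x ^ n) ↔ Injective (fun u : G₀ˣ => u ^ n) := by
  refine ⟨fun h u v huv => Units.ext (h (by simpa using congrArg Units.val huv)),
    fun h x y hxy => ?_⟩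
  simp only at hxy
  by_cases hx : x = 0
  · rw [hx, zero_pow hn, eq_comm, pow_eq_zero_iff hn] at hxy
    rw [hx, hxy]
  by_cases hy : y = 0
  · rw [hy, zero_pow hn, pow_eq_zero_iff hn] at hxy
    exact absurd hxy hx
  exact congrArg Units.val
    (h (a₁ := Units.mk0 x hx) (a₂ := Units.mk0 y hy) (Units.ext (by simpa using hxy)))

end GroupWithZero

namespace FiniteField

variable {F : Type*} [Field F] [Fintype F]

theorem forall_pow_eq_pow_iff {m n : ℕ} (hm : m ≠ 0) (hn : n ≠ 0) :
    (∀ x : F, x ^ m = x ^ n) ↔ m ≡ n [MOD Fintype.card F - 1] := by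
  rw [forall_pow_eq_pow_iff_units hm hn, IsCyclic.forall_pow_eq_pow_iff, Nat.card_units,
    Nat.card_eq_fintype_card]

theorem pow_bijective_iff {n : ℕ} (hn : n ≠ 0) :
    Bijective (fun x : F => x ^ n) ↔ n.Coprime (Fintype.card F - 1) := by
  rw [← Finite.injective_iff_bijective, pow_injective_iff_units hn]
  change Injective (powMonoidHom n : Fˣ →* Fˣ) ↔ _
  rw [← MonoidHom.ker_eq_bot_iff, ← Subgroup.card_eq_one, IsCyclic.card_powMonoidHom_ker,
    Nat.card_units, Nat.card_eq_fintype_card, Nat.Coprime, Nat.gcd_comm]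

theorem exists_pow_eq_iff_s8 {b : F} (hb : b ≠ 0) (d : ℕ) :
    (∃ z : F, z ≠ 0 ∧ z ^ d = b) ↔
      b ^ ((Fintype.card F - 1) / (Fintype.card F - 1).gcd d) = 1 := by
  have := SetLike.ext_iff.1 (IsCyclic.range_powMonoidHom (G := Fˣ) d) (Units.mk0 b hb)
  simp only [MonoidHom.mem_range, powMonoidHom_apply, Units.ext_iff, Units.val_pow_eq_pow_val,
    Units.val_mk0, Nat.card_units, Nat.card_eq_fintype_card, MonoidHom.mem_ker,
    Units.val_one] at this
  rw [← this]
  exact ⟨fun ⟨z, hz, h⟩ => ⟨Units.mk0 z hz, h⟩, fun ⟨u, h⟩ => ⟨u, u.ne_zero, h⟩⟩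

theorem bijective_pow_char_pow_add_mul_iff {p : ℕ} [Fact p.Prime] [CharP F p] (n : ℕ) (a : F) :
    Bijective (fun x : F => x ^ p ^ n + a * x) ↔ ∀ z : F, z ≠ 0 → z ^ (p ^ n - 1) ≠ -a := by
  let L : F →+ F := (iterateFrobenius F p n).toAddMonoidHom + AddMonoidHom.mulLeft a
  have hL : (fun x : F => x ^ p ^ n + a * x) = L :=
    funext fun x => by simp [L, iterateFrobenius_def]
  have hfactor : ∀ z : F, z ^ p ^ n + a * z = (z ^ (p ^ n - 1) + a) * z := fun z => by
    rw [add_mul, pow_sub_one_mul (pow_ne_zero n (Fact.out : p.Prime).ne_zero), mul_comm]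
  rw [hL, ← Finite.injective_iff_bijective, injective_iff_map_eq_zero]
  refine forall_congr' fun z => ?_
  rw [← hL]
  simp only [hfactor, mul_eq_zero, add_eq_zero_iff_eq_neg]
  tauto

theorem forall_pow_mul_pow_sub_one_add_eq_iff {q r h : ℕ} (hq : q ≠ 0) (hr : r ≠ 0) (a : F) :
    (∀ x : F, x ^ r * (x ^ (q - 1) + a) = x ^ (r * q ^ h) + a * x ^ r) ↔
      r + (q - 1) ≡ r * q ^ h [MOD Fintype.card F - 1] := by
  rw [← forall_pow_eq_pow_iff (by omega) (by positivity)]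
  refine forall_congr' fun x => ?_
  rw [mul_add, ← pow_add, mul_comm (x ^ r) a, add_left_inj]

theorem bijective_pow_mul_pow_sub_one_add_iff {q r h : ℕ} (hr : r ≠ 0) {a : F}
    (hx : ∀ x : F, x ^ r * (x ^ (q - 1) + a) = x ^ (r * q ^ h) + a * x ^ r) :
    Bijective (fun x : F => x ^ r * (x ^ (q - 1) + a)) ↔
      r.Coprime (Fintype.card F - 1) ∧ Bijective (fun y : F => y ^ q ^ h + a * y) := by
  have hcomp : (fun x : F => x ^ r * (x ^ (q - 1) + a)) =
      (fun y : F => y ^ q ^ h + a * y) ∘ (fun x : F => x ^ r) :=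
    funext fun x => by rw [comp_apply, hx, pow_mul]
  rw [hcomp, Finite.bijective_comp_iff, pow_bijective_iff hr, and_comm]

theorem bijective_pow_pow_add_mul_iff {p m q e h : ℕ} [Fact p.Prime] [CharP F p] (hq : q = p ^ m)
    (hq1 : 1 < q) (hF : Fintype.card F = q ^ e) (hhe : h.Coprime e) {a : F} (ha : a ≠ 0) :
    Bijective (fun y : F => y ^ q ^ h + a * y) ↔ (-a) ^ (∑ i ∈ range e, q ^ i) ≠ 1 := by
  have hpow := exists_pow_eq_iff_s8 (neg_ne_zero.2 ha) (q ^ h - 1)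
  rw [hF, Nat.pow_sub_one_gcd_pow_sub_one, Nat.gcd_comm, hhe, pow_one,
    ← geom_sum_mul_of_one_le hq1.le e, Nat.mul_div_cancel _ (by omega)] at hpow
  have hqh : q ^ h = p ^ (m * h) := by rw [hq, pow_mul]
  rw [hqh, bijective_pow_char_pow_add_mul_iff, ← hqh, Ne, ← hpow]
  simp only [not_exists, not_and]

end FiniteField

open FiniteField in
/-- `f(x) = x^r (x^{q-1} + a)` permutes `F_{q^e}` and is the composition of a linearized
binomial `x^{q^h} + a x` and the monomial `x^r` if and only if `(-a)^ℓ ≠ 1`,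
`gcd(r, q-1) = 1`, and `r ≡ sℓ + Σ_{i=0}^{k-1} q^{hi} (mod q^e - 1)` for some positive
integers `s` and `h` with `gcd(h, e) = 1`, where `k ∈ {1, …, e-1}` satisfies
`hk ≡ 1 (mod e)` and `ℓ = q^{e-1} + ⋯ + q + 1`. -/
theorem stmt_8 (p m q e : ℕ) (hp : p.Prime) (hm : 0 < m) (hq : q = p ^ m)
    (he : 2 ≤ e) {F : Type*} [Field F] [Fintype F] (hF : Fintype.card F = q ^ e)
    (a : F) (ha : a ≠ 0) (r : ℕ) (hr : 1 ≤ r)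
    (ℓ : ℕ) (hℓ : ℓ = ∑ i ∈ Finset.range e, q ^ i) :
    (Function.Bijective (fun x : F => x ^ r * (x ^ (q - 1) + a)) ∧
      ∃ h : ℕ, 0 < h ∧
        ∀ x : F, x ^ r * (x ^ (q - 1) + a) = x ^ (r * q ^ h) + a * x ^ r) ↔
    ((-a) ^ ℓ ≠ 1 ∧ Nat.gcd r (q - 1) = 1 ∧
      ∃ h k s : ℕ, 0 < h ∧ Nat.gcd h e = 1 ∧ 1 ≤ k ∧ k ≤ e - 1 ∧ h * k ≡ 1 [MOD e] ∧
        0 < s ∧ r ≡ s * ℓ + ∑ i ∈ Finset.range k, q ^ (h * i) [MOD q ^ e - 1]) := by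
  have hq1 : 1 < q := hq ▸ Nat.one_lt_pow hm.ne' hp.one_lt
  have := Fact.mk hp
  have : CharP F p := charP_of_card_eq_prime_pow (hF.trans (by rw [hq, ← pow_mul]))
  have hcard : Fintype.card F - 1 = q ^ e - 1 := by rw [hF]
  subst hℓ
  have hℓq : (∑ i ∈ range e, q ^ i) * (q - 1) = q ^ e - 1 := geom_sum_mul_of_one_le hq1.le e
  have hℓ0 : 0 < ∑ i ∈ range e, q ^ i := geom_sum_pos (Nat.zero_le q) (by omega)
  have hid := fun h => hcard ▸ forall_pow_mul_pow_sub_one_add_eq_iff (q := q) (r := r) (h := h)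
    (by omega) (by omega) a
  constructor
  · rintro ⟨hbij, h, hh, hx⟩
    have hc := (hid h).1 hx
    have hhe := Nat.coprime_of_add_sub_one_modEq_mul_pow hq1 (by omega) hc
    obtain ⟨k, hk1, hke, hk⟩ := Nat.exists_mul_modEq_one_of_coprime he hhe
    obtain ⟨s, hs, hrs⟩ := (Nat.modEq_iff_exists_pos_mul_add (c := q - 1) hℓ0 (by omega)).1
      ((Nat.add_sub_one_modEq_mul_pow_iff hq1 (by omega) hk).1 hc)
    obtain ⟨hrN, hL⟩ := (bijective_pow_mul_pow_sub_one_add_iff (by omega) hx).1 hbij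
    refine ⟨(bijective_pow_pow_add_mul_iff hq hq1 hF hhe ha).1 hL,
      ?_, h, k, s, hh, hhe, hk1, hke, hk, hs, hℓq ▸ hrs⟩
    exact (hcard ▸ hrN).coprime_dvd_right (Dvd.intro_left _ hℓq)
  · rintro ⟨ha', hrq, h, k, s, hh, hhe, hk1, hke, hk, hs, hrs⟩
    have hc := (Nat.add_sub_one_modEq_mul_pow_iff hq1 (by omega) hk).2
      ((Nat.modEq_iff_exists_pos_mul_add hℓ0 (by omega)).2 ⟨s, hs, hℓq ▸ hrs⟩)
    have hx := (hid h).2 hc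
    refine ⟨(bijective_pow_mul_pow_sub_one_add_iff (by omega) hx).2 ⟨?_, ?_⟩, h, hh, hx⟩
    · exact hcard ▸ Nat.Coprime.pow_sub_one_of_add_sub_one_modEq_mul_pow hrq hc
    · exact (bijective_pow_pow_add_mul_iff hq hq1 hF hhe ha).2 ha'
end

section
/- Let q be a prime power, e ≥ 2, a ∈ F_{q^e} nonzero, r ≥ 1, f(x) = x^r(x^{q−1} + a), and ℓ = q^{e−1} + ⋯ + q + 1. If (−a)^ℓ ≠ 1, gcd(r, q−1) = 1, and the least nonnegative residue of r modulo ℓ lies in {1, ℓ − q}, then f permutes F_{q^e}. -/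
/-!
Put `μ = {t | t ^ ℓ = 1}`. Since `(q - 1) ℓ = q ^ e - 1`, the map `x ↦ x ^ (q - 1)` sends `F^×`
onto `μ`, and `f(x) ^ (q - 1) = g(x ^ (q - 1))` with `g(t) = t ^ r (t + a) ^ (q - 1)`. So `f` is
injective as soon as `gcd(r, q - 1) = 1` and `g` permutes `μ` (the criterion of Park–Lee and
Zieve). On `μ`, `t ^ r` only depends on `r mod ℓ`.

For `r ≡ 1`, write `y ∈ μ` as `v ^ (q - 1)` and solve `u ^ q + a u = v`: this additive map is
injective, since a nonzero `u` in its kernel would give `u ^ (q - 1) = -a ∈ μ`. Then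
`t = u ^ (q - 1)` satisfies `g(t) = (u ^ q + a u) ^ (q - 1) = y`.
For `r ≡ ℓ - q`, substituting `t = z⁻¹` gives `g(z⁻¹) = a ^ (q - 1) z (z + a⁻¹) ^ (q - 1)`,
which reduces to the first case with `a⁻¹` in place of `a`.
-/

open Function Set

theorem injective_pow_add_mul {R : Type*} [CommRing R] [IsDomain R] {p m : ℕ} [ExpChar R p]
    {b : R} (hb : ∀ u : R, u ≠ 0 → u ^ (p ^ m - 1) ≠ -b) :
    Injective fun u : R => u ^ p ^ m + b * u := by
  intro u w huw
  by_contra hne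
  have hu : u - w ≠ 0 := sub_ne_zero.2 hne
  refine hb (u - w) hu (mul_right_cancel₀ hu ?_)
  rw [← pow_succ, Nat.sub_add_cancel (Nat.one_le_pow _ _ (expChar_pos R p)),
    sub_pow_expChar_pow]
  linear_combination huw

namespace FiniteField

variable {F : Type*} [Field F] [Fintype F] {n ℓ : ℕ}

theorem pow_pow_eq_one (hcard : n * ℓ = Fintype.card F - 1) {x : F} (hx : x ≠ 0) :
    (x ^ n) ^ ℓ = 1 := by
  rw [← pow_mul, hcard]
  exact pow_card_sub_one_eq_one x hx

theorem exists_pow_eq_of_pow_eq_one (hcard : n * ℓ = Fintype.card F - 1)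
    {y : F} (hy : y ^ ℓ = 1) : ∃ v : F, v ≠ 0 ∧ v ^ n = y := by
  classical
  have hnℓ : n * ℓ ≠ 0 := by have := Fintype.one_lt_card (α := F); omega
  have : NeZero ℓ := ⟨right_ne_zero_of_mul hnℓ⟩
  have hn : n ≠ 0 := left_ne_zero_of_mul hnℓ
  obtain ⟨g, hgen⟩ := IsCyclic.exists_generator (α := Fˣ)
  have hg : IsPrimitiveRoot (g : F) (n * ℓ) := by
    rw [hcard, ← Fintype.card_units, IsPrimitiveRoot.coe_units_iff, ← Nat.card_eq_fintype_card,
      ← orderOf_eq_card_of_forall_mem_zpowers hgen]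
    exact IsPrimitiveRoot.orderOf g
  have hgn := hg.pow_of_dvd hn (dvd_mul_right n ℓ)
  rw [Nat.mul_div_cancel_left _ (Nat.pos_of_ne_zero hn)] at hgn
  obtain ⟨i, -, hi⟩ := hgn.eq_pow_of_pow_eq_one hy
  exact ⟨(g : F) ^ i, by simp, by rw [← hi, ← pow_mul, ← pow_mul, mul_comm]⟩

theorem mapsTo_pow_mul_pow (hcard : n * ℓ = Fintype.card F - 1) (r : ℕ) {h : F → F}
    (hh : ∀ t : F, t ^ ℓ = 1 → h t ≠ 0) :
    MapsTo (fun t => t ^ r * h t ^ n) {t | t ^ ℓ = 1} {t | t ^ ℓ = 1} := by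
  intro t (ht : t ^ ℓ = 1)
  show (t ^ r * h t ^ n) ^ ℓ = 1
  rw [mul_pow, ← pow_mul, mul_comm r ℓ, pow_mul, ht, one_pow, one_mul,
    pow_pow_eq_one hcard (hh t ht)]

theorem injective_pow_mul_comp_pow (hcard : n * ℓ = Fintype.card F - 1) {r : ℕ} (hr : r ≠ 0)
    (hrn : r.Coprime n) {h : F → F} (hh : ∀ t : F, t ^ ℓ = 1 → h t ≠ 0)
    (hg : InjOn (fun t => t ^ r * h t ^ n) {t | t ^ ℓ = 1}) :
    Injective fun x : F => x ^ r * h (x ^ n) := by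
  have hf0 : ∀ x : F, x ^ r * h (x ^ n) = 0 ↔ x = 0 := fun x => by
    refine ⟨fun hx => by_contra fun hx0 => ?_, fun hx => by simp [hx, hr]⟩
    exact mul_ne_zero (pow_ne_zero r hx0) (hh _ (pow_pow_eq_one hcard hx0)) hx
  intro x y hxy
  dsimp only at hxy
  obtain rfl | hx := eq_or_ne x 0
  · exact ((hf0 y).1 (hxy.symm.trans ((hf0 0).2 rfl))).symm
  obtain rfl | hy := eq_or_ne y 0
  · exact (hf0 x).1 (hxy.trans ((hf0 0).2 rfl))
  have hxn := pow_pow_eq_one hcard hx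
  have hyn := pow_pow_eq_one hcard hy
  have hn : x ^ n = y ^ n := hg hxn hyn <| by
    have hpow : ∀ z : F, (z ^ r * h (z ^ n)) ^ n = (z ^ n) ^ r * h (z ^ n) ^ n := fun z => by
      rw [mul_pow, ← pow_mul, ← pow_mul, mul_comm r n]
    simp only [← hpow, hxy]
  have hr : x ^ r = y ^ r := mul_right_cancel₀ (hh _ hyn) (hn ▸ hxy)
  have hquot : (x / y) ^ r.gcd n = 1 := pow_gcd_eq_one.2
    ⟨by rw [div_pow, hr, div_self (pow_ne_zero _ hy)],
      by rw [div_pow, hn, div_self (pow_ne_zero _ hy)]⟩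
  rwa [hrn, pow_one, div_eq_one_iff_eq hy] at hquot

end FiniteField

theorem pow_mul_inv_add_pow {K : Type*} [Field K] {a z : K} (ha : a ≠ 0) (hz : z ≠ 0) {q : ℕ}
    (hq : q ≠ 0) : z ^ q * (z⁻¹ + a) ^ (q - 1) = a ^ (q - 1) * (z * (z + a⁻¹) ^ (q - 1)) := by
  obtain ⟨k, rfl⟩ := Nat.exists_eq_add_one_of_ne_zero hq
  have hza : z * (z⁻¹ + a) = a * (z + a⁻¹) := by field_simp; ring
  rw [Nat.add_sub_cancel]
  calc z ^ (k + 1) * (z⁻¹ + a) ^ k = z * (z * (z⁻¹ + a)) ^ k := by rw [mul_pow, pow_succ']; ring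
    _ = a ^ k * (z * (z + a⁻¹) ^ k) := by rw [hza, mul_pow]; ring

section SurjOn

variable {F : Type*} [Field F] [Fintype F] {q ℓ : ℕ}

open FiniteField

theorem surjOn_mul_add_pow {p m : ℕ} [ExpChar F p] (hq : q = p ^ m)
    (hcard : (q - 1) * ℓ = Fintype.card F - 1) {b : F} (hb : (-b) ^ ℓ ≠ 1) :
    SurjOn (fun t => t * (t + b) ^ (q - 1)) {t | t ^ ℓ = 1} {t | t ^ ℓ = 1} := by
  subst hq
  intro y hy
  obtain ⟨v, hv, rfl⟩ := exists_pow_eq_of_pow_eq_one hcard hy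
  have hL : Injective fun u : F => u ^ p ^ m + b * u :=
    injective_pow_add_mul fun u hu hub => hb (hub ▸ pow_pow_eq_one hcard hu)
  obtain ⟨u, rfl⟩ := Finite.injective_iff_surjective.1 hL v
  have hu : u ≠ 0 := by
    rintro rfl
    exact hv (by simp [zero_pow (pow_ne_zero m (expChar_pos F p).ne')])
  refine ⟨u ^ (p ^ m - 1), pow_pow_eq_one hcard hu, ?_⟩
  dsimp only
  rw [← mul_pow, mul_add, ← pow_succ', Nat.sub_add_cancel (Nat.one_le_pow _ _ (expChar_pos F p)),
    mul_comm u]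

theorem surjOn_pow_mul_add_pow_of_mod_eq_sub (hcard : (q - 1) * ℓ = Fintype.card F - 1)
    (hq : q ≠ 0) (hqℓ : q ≤ ℓ) {r : ℕ} (hr : r % ℓ = ℓ - q) {a : F} (ha : a ≠ 0)
    (h : SurjOn (fun t => t * (t + a⁻¹) ^ (q - 1)) {t | t ^ ℓ = 1} {t | t ^ ℓ = 1}) :
    SurjOn (fun t => t ^ r * (t + a) ^ (q - 1)) {t | t ^ ℓ = 1} {t | t ^ ℓ = 1} := by
  intro y (hy : y ^ ℓ = 1)
  obtain ⟨z, hz : z ^ ℓ = 1, hzy⟩ :=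
    h (show (y / a ^ (q - 1)) ^ ℓ = 1 by rw [div_pow, hy, pow_pow_eq_one hcard ha, div_one])
  have hz0 : z ≠ 0 := by rintro rfl; simp [zero_pow (by omega : ℓ ≠ 0)] at hz
  have hzr : z⁻¹ ^ r = z ^ q := by
    rw [pow_eq_pow_mod r (by rw [inv_pow, hz, inv_one]), hr, pow_sub₀ _ (inv_ne_zero hz0) hqℓ,
      inv_pow, hz, inv_pow, inv_inv, inv_one, one_mul]
  refine ⟨z⁻¹, show z⁻¹ ^ ℓ = 1 by rw [inv_pow, hz, inv_one], ?_⟩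
  dsimp only at hzy ⊢
  rw [hzr, pow_mul_inv_add_pow ha hz0 hq, hzy, mul_div_cancel₀ _ (pow_ne_zero _ ha)]

theorem surjOn_pow_mul_add_pow {p m : ℕ} [ExpChar F p] (hq : q = p ^ m)
    (hcard : (q - 1) * ℓ = Fintype.card F - 1) (hqℓ : q ≤ ℓ) {a : F} (ha : a ≠ 0)
    (hA : (-a) ^ ℓ ≠ 1) {r : ℕ} (hr : r % ℓ = 1 ∨ r % ℓ = ℓ - q) :
    SurjOn (fun t => t ^ r * (t + a) ^ (q - 1)) {t | t ^ ℓ = 1} {t | t ^ ℓ = 1} := by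
  rcases hr with hr | hr
  · refine (surjOn_mul_add_pow hq hcard hA).congr fun t (ht : t ^ ℓ = 1) => ?_
    dsimp only
    rw [pow_eq_pow_mod r ht, hr, pow_one]
  · have hq0 : q ≠ 0 := hq ▸ pow_ne_zero _ (expChar_pos F p).ne'
    refine surjOn_pow_mul_add_pow_of_mod_eq_sub hcard hq0 hqℓ hr ha
      (surjOn_mul_add_pow hq hcard ?_)
    rwa [neg_inv, inv_pow, Ne, inv_eq_one]

end SurjOn

theorem stmt_9_general (p m q e : ℕ) (hp : p.Prime) (hq : q = p ^ m)
    (he : 2 ≤ e) {F : Type*} [Field F] [Fintype F] (hF : Fintype.card F = q ^ e)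
    (a : F) (ha : a ≠ 0) (r : ℕ)
    (ℓ : ℕ) (hℓ : ℓ = ∑ i ∈ Finset.range e, q ^ i)
    (hA : (-a) ^ ℓ ≠ 1) (hgcd : Nat.gcd r (q - 1) = 1)
    (hres : r % ℓ = 1 ∨ r % ℓ = ℓ - q) :
    Function.Bijective (fun x : F => x ^ r * (x ^ (q - 1) + a)) := by
  have : Fact p.Prime := ⟨hp⟩
  have : CharP F p := charP_of_card_eq_prime_pow (f := m * e) (by rw [hF, hq, pow_mul])
  have hq1 : 1 ≤ q := hq ▸ Nat.one_le_pow _ _ hp.pos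
  have hcard : (q - 1) * ℓ = Fintype.card F - 1 := by
    have := geom_sum_mul_add (q - 1) e
    rw [Nat.sub_add_cancel hq1, ← hℓ] at this
    rw [hF, mul_comm]
    omega
  have hqℓ : q < ℓ := by
    rw [hℓ]
    calc q < ∑ i ∈ Finset.range 2, q ^ i := by simp
      _ ≤ _ := Finset.sum_le_sum_of_subset (Finset.range_subset_range.2 he)
  have hr : r ≠ 0 := by rintro rfl; rw [Nat.zero_mod] at hres; omega
  have hroots : ∀ t : F, t ^ ℓ = 1 → t + a ≠ 0 := fun t ht h0 =>
    hA (by rwa [← eq_neg_of_add_eq_zero_left h0])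
  have hg := ((toFinite _).surjOn_iff_bijOn_of_mapsTo
    (FiniteField.mapsTo_pow_mul_pow hcard r hroots)).1
    (surjOn_pow_mul_add_pow hq hcard hqℓ.le ha hA hres)
  exact Finite.injective_iff_bijective.1
    (FiniteField.injective_pow_mul_comp_pow hcard hr hgcd hroots hg.injOn)

/-- If `(-a)^ℓ ≠ 1`, `gcd(r, q-1) = 1`, and `r mod ℓ ∈ {1, ℓ - q}`, then
`f(x) = x^r (x^{q-1} + a)` permutes `F_{q^e}`, where `ℓ = q^{e-1} + ⋯ + q + 1`. -/
theorem stmt_9 (p m q e : ℕ) (hp : p.Prime) (hm : 0 < m) (hq : q = p ^ m)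
    (he : 2 ≤ e) {F : Type*} [Field F] [Fintype F] (hF : Fintype.card F = q ^ e)
    (a : F) (ha : a ≠ 0) (r : ℕ) (hr : 1 ≤ r)
    (ℓ : ℕ) (hℓ : ℓ = ∑ i ∈ Finset.range e, q ^ i)
    (hA : (-a) ^ ℓ ≠ 1) (hgcd : Nat.gcd r (q - 1) = 1)
    (hres : r % ℓ = 1 ∨ r % ℓ = ℓ - q) :
    Function.Bijective (fun x : F => x ^ r * (x ^ (q - 1) + a)) :=
  stmt_9_general p m q e hp hq he hF a ha r ℓ hℓ hA hgcd hres
end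

section
/- Let q be a prime power, e ≥ 2 odd, a ∈ F_{q^e} nonzero, r ≥ 1, f(x) = x^r(x^{q−1} + a), and ℓ = q^{e−1} + ⋯ + q + 1. If (−a)^ℓ ≠ 1, gcd(r, q−1) = 1, and the least nonnegative residue of r modulo ℓ lies in {q^{(e+1)/2} + 1, ℓ − q^{(e+1)/2} − q}, then f permutes F_{q^e}. -/
/-!
Put `u = x ^ (q - 1)`, so that `u ^ ℓ = 1`. As `gcd(r, q - 1) = 1`, `f` is a permutation as soon
as `f(x) ^ (q - 1) = u ^ (r mod ℓ) * (u + a) ^ (q - 1)` determines `u`.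
For `r ≡ q^s + 1 (mod ℓ)` with `2s = e + 1`, an equality `f(x)^(q-1) = f(y)^(q-1)` gives, with
`z = x / y` and some `c ∈ 𝔽_q`, the relation `y^q · Y^(q^s) = -a · y · Y` for `Y = z^(q^s+1) - c`;
here `Y^(q^s) = z^(q^s+q) - c` because `q^(2s) = q^e · q`. Applying the norm `(·)^ℓ` to `𝔽_q`
gives `N(Y) = N(-a) N(Y)`, so `Y = 0` and hence `z^q = z`, i.e. `x^(q-1) = y^(q-1)`.
The residue `ℓ - q^s - q` reduces to the first one under `x ↦ x⁻¹`, `a ↦ a⁻¹`.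
-/

open Finset

lemma pow_add_le_geomSum {q s e : ℕ} (hs₁ : 1 < s) (hse : s < e) :
    q ^ s + q ≤ ∑ i ∈ range e, q ^ i :=
  calc q ^ s + q = ∑ i ∈ {1, s}, q ^ i := by rw [sum_pair (by omega), pow_one, add_comm]
    _ ≤ ∑ i ∈ range e, q ^ i :=
      sum_le_sum_of_subset fun i => by simp only [mem_insert, mem_singleton, mem_range]; omega

section Field

variable {F : Type*} [Field F]

def inducedMap (q r : ℕ) (a u : F) : F := u ^ r * (u + a) ^ (q - 1)

lemma inducedMap_sub_eq {q s ℓ : ℕ} {a u : F} (ha : a ≠ 0) (hu : u ^ ℓ = 1) (hq : 1 ≤ q)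
    (hℓ : q ^ s + q ≤ ℓ) :
    inducedMap q (ℓ - q ^ s - q) a u = a ^ (q - 1) * inducedMap q (q ^ s + 1) a⁻¹ u⁻¹ := by
  have hu0 : u ≠ 0 := by
    rintro rfl
    exact zero_ne_one ((zero_pow (by omega)).symm.trans hu)
  have hsplit : u ^ (ℓ - q ^ s - q) * u ^ (q ^ s + 1) * u ^ (q - 1) = 1 := by
    rw [← pow_add, ← pow_add, ← hu]
    congr 1
    omega
  have hinv : u ^ (ℓ - q ^ s - q) = u⁻¹ ^ (q ^ s + 1) * u⁻¹ ^ (q - 1) := by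
    rw [inv_pow, inv_pow, ← mul_inv]
    exact eq_inv_of_mul_eq_one_left (by rw [← mul_assoc, hsplit])
  have hfac : a * (u⁻¹ + a⁻¹) = u⁻¹ * (u + a) := by
    field_simp
    ring
  calc inducedMap q (ℓ - q ^ s - q) a u
      = u⁻¹ ^ (q ^ s + 1) * (u⁻¹ * (u + a)) ^ (q - 1) := by
        rw [inducedMap, hinv, mul_pow, mul_assoc]
    _ = a ^ (q - 1) * inducedMap q (q ^ s + 1) a⁻¹ u⁻¹ := by
        rw [← hfac, inducedMap, mul_pow]
        ring

lemma pow_mul_add_pow_eq_inducedMap {q r ℓ : ℕ} {a x : F} (hx : (x ^ (q - 1)) ^ ℓ = 1) :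
    (x ^ r * (x ^ (q - 1) + a)) ^ (q - 1) = inducedMap q (r % ℓ) a (x ^ (q - 1)) := by
  rw [inducedMap, mul_pow, pow_right_comm, ← pow_eq_pow_mod r hx]

theorem bijective_pow_mul_comp_pow [Finite F] {n r : ℕ} {h : F → F}
    (hr : r ≠ 0) (hgcd : r.gcd n = 1) (hh : ∀ x ≠ 0, h (x ^ n) ≠ 0)
    (hfib : ∀ x y, x ≠ 0 → y ≠ 0 →
      (x ^ r * h (x ^ n)) ^ n = (y ^ r * h (y ^ n)) ^ n → x ^ n = y ^ n) :
    Function.Bijective fun x => x ^ r * h (x ^ n) := by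
  refine Finite.injective_iff_bijective.mp fun x y hxy => ?_
  have hne : ∀ {w : F}, w ≠ 0 → w ^ r * h (w ^ n) ≠ 0 := fun hw =>
    mul_ne_zero (pow_ne_zero r hw) (hh _ hw)
  by_cases hx : x = 0
  · subst hx
    by_contra hy
    exact hne (Ne.symm hy) (by simpa [hr] using hxy.symm)
  by_cases hy : y = 0
  · exact absurd (by simpa [hy, hr] using hxy) (hne hx)
  have hn : x ^ n = y ^ n := hfib x y hx hy (congrArg (· ^ n) hxy)
  have hr' : x ^ r = y ^ r := mul_right_cancel₀ (hh y hy) (by simpa only [hn] using hxy)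
  have hxy1 : (x / y) ^ r.gcd n = 1 := pow_gcd_eq_one.2
    ⟨by rw [div_pow, hr', div_self (pow_ne_zero _ hy)],
      by rw [div_pow, hn, div_self (pow_ne_zero _ hy)]⟩
  rwa [hgcd, pow_one, div_eq_one_iff_eq hy] at hxy1

end Field

section FiniteField

variable {F : Type*} [Field F] [Fintype F] {q e ℓ : ℕ}

lemma one_lt_of_card_eq_pow (hF : Fintype.card F = q ^ e) : 1 < q := by
  by_contra! hq
  have := Fintype.one_lt_card (α := F)
  rw [hF] at this
  exact this.not_ge (pow_le_one₀ (Nat.zero_le q) hq)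

lemma sub_pow_pow_of_card_eq_pow (hF : Fintype.card F = q ^ e) (x y : F) (k : ℕ) :
    (x - y) ^ q ^ k = x ^ q ^ k - y ^ q ^ k := by
  obtain ⟨p, hchar⟩ := CharP.exists F
  obtain ⟨n, hp, hn⟩ := FiniteField.card F p
  have he : e ≠ 0 := by
    rintro rfl
    exact (Fintype.one_lt_card (α := F)).ne' (by rw [hF, pow_zero])
  obtain ⟨j, -, rfl⟩ := (Nat.dvd_prime_pow hp).1 (hn ▸ hF ▸ dvd_pow_self q he)
  have := Fact.mk hp
  simp only [← pow_mul]
  exact sub_pow_char_pow x y _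

lemma pow_mul_geomSum_eq_one (hF : Fintype.card F = q ^ e) (hℓ : ℓ = ∑ i ∈ range e, q ^ i)
    {x : F} (hx : x ≠ 0) : x ^ ((q - 1) * ℓ) = 1 := by
  have hq : q - 1 + 1 = q := Nat.sub_add_cancel (one_lt_of_card_eq_pow hF).le
  have hcard : (q - 1) * ℓ = Fintype.card F - 1 := by
    rw [hF, ← hq, ← geom_sum_mul_add (q - 1) e, hℓ, hq, mul_comm, Nat.add_sub_cancel]
  rw [hcard]
  exact FiniteField.pow_card_sub_one_eq_one x hx

lemma pow_pow_mul_geomSum (hF : Fintype.card F = q ^ e) (hℓ : ℓ = ∑ i ∈ range e, q ^ i)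
    {x : F} (hx : x ≠ 0) (k : ℕ) : x ^ (q ^ k * ℓ) = x ^ ℓ := by
  have hq : q = q - 1 + 1 := (Nat.sub_add_cancel (one_lt_of_card_eq_pow hF).le).symm
  have hfrob : (x ^ ℓ) ^ q = x ^ ℓ := by
    rw [← pow_mul, mul_comm, hq, add_mul, one_mul, pow_add, pow_mul_geomSum_eq_one hF hℓ hx,
      one_mul]
  induction k with
  | zero => rw [pow_zero, one_mul]
  | succ k ih => rw [pow_succ', mul_assoc, pow_mul', ih, hfrob]

lemma eq_zero_of_pow_mul_pow_pow_eq (hF : Fintype.card F = q ^ e)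
    (hℓ : ℓ = ∑ i ∈ range e, q ^ i) {c d Y : F} (hc : c ^ ℓ ≠ 1) (hd : d ≠ 0) {k : ℕ}
    (h : d ^ q * Y ^ q ^ k = c * (d * Y)) : Y = 0 := by
  by_contra hY
  have hnorm := congrArg (· ^ ℓ) h
  have hdq : d ^ (q * ℓ) = d ^ ℓ := by simpa using pow_pow_mul_geomSum hF hℓ hd 1
  simp only [mul_pow, ← pow_mul, hdq, pow_pow_mul_geomSum hF hℓ hY k] at hnorm
  exact hc (mul_eq_right₀ (mul_ne_zero (pow_ne_zero _ hd) (pow_ne_zero _ hY)) |>.1 hnorm.symm)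

lemma pow_sub_one_add_ne_zero (hF : Fintype.card F = q ^ e) (hℓ : ℓ = ∑ i ∈ range e, q ^ i)
    {a w : F} (ha : (-a) ^ ℓ ≠ 1) (hw : w ≠ 0) : w ^ (q - 1) + a ≠ 0 := fun h0 =>
  ha (by rw [← eq_neg_of_add_eq_zero_left h0, ← pow_mul, pow_mul_geomSum_eq_one hF hℓ hw])

lemma pow_eq_self_of_linearized_eq (hF : Fintype.card F = q ^ e)
    (hℓ : ℓ = ∑ i ∈ range e, q ^ i) {s : ℕ} (hs : 2 * s = e + 1) {a c y z : F}
    (ha : (-a) ^ ℓ ≠ 1) (hy : y ≠ 0) (hz : z ≠ 0) (hc : c ^ q = c)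
    (h : y ^ q * (z ^ q ^ s * z ^ q - c) = -a * (y * (z ^ q ^ s * z - c))) : z ^ q = z := by
  have hcs : c ^ q ^ s = c := by
    rw [← congrFun (pow_iterate q s) c]
    exact Function.IsFixedPt.iterate hc s
  have hzs : (z ^ q ^ s) ^ q ^ s = z ^ q := by
    rw [← pow_mul, ← pow_add, ← two_mul, hs, pow_succ, pow_mul, ← hF, FiniteField.pow_card]
  have hconj : z ^ q ^ s * z ^ q - c = (z ^ q ^ s * z - c) ^ q ^ s := by
    rw [sub_pow_pow_of_card_eq_pow hF, mul_pow, hzs, hcs, mul_comm]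
  have hY := eq_zero_of_pow_mul_pow_pow_eq hF hℓ ha hy (hconj ▸ h)
  rw [hY, zero_pow (pow_ne_zero _ (one_lt_of_card_eq_pow hF).ne_zero), ← hY, sub_left_inj] at hconj
  exact mul_left_cancel₀ (pow_ne_zero _ hz) hconj

lemma pow_sub_one_eq_of_inducedMap_eq (hF : Fintype.card F = q ^ e)
    (hℓ : ℓ = ∑ i ∈ range e, q ^ i) {s : ℕ} (hs : 2 * s = e + 1) {a x y : F}
    (ha : (-a) ^ ℓ ≠ 1) (hx : x ≠ 0) (hy : y ≠ 0)
    (h : inducedMap q (q ^ s + 1) a (x ^ (q - 1)) = inducedMap q (q ^ s + 1) a (y ^ (q - 1))) :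
    x ^ (q - 1) = y ^ (q - 1) := by
  have hq : q = q - 1 + 1 := (Nat.sub_add_cancel (one_lt_of_card_eq_pow hF).le).symm
  have hpow_q : ∀ w : F, w ^ q = w ^ (q - 1) * w := fun w => by rw [← pow_succ, ← hq]
  have hlin : ∀ w : F, (w ^ q ^ s * (w ^ q + a * w)) ^ (q - 1) =
      inducedMap q (q ^ s + 1) a (w ^ (q - 1)) := fun w => by
    rw [inducedMap, hpow_q, ← add_mul, mul_comm _ w, ← mul_assoc, mul_pow, mul_pow, pow_succ,
      pow_right_comm]
  have hB : y ^ q ^ s * (y ^ q + a * y) ≠ 0 := by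
    rw [hpow_q, ← add_mul, mul_comm _ y]
    exact mul_ne_zero (pow_ne_zero _ hy) (mul_ne_zero hy (pow_sub_one_add_ne_zero hF hℓ ha hy))
  obtain ⟨z, rfl⟩ : ∃ z, x = z * y := ⟨x / y, (div_mul_cancel₀ x hy).symm⟩
  have hz : z ≠ 0 := left_ne_zero_of_mul hx
  obtain ⟨c, hAB⟩ : ∃ c, (z * y) ^ q ^ s * ((z * y) ^ q + a * (z * y)) =
      c * (y ^ q ^ s * (y ^ q + a * y)) := ⟨_, (div_mul_cancel₀ _ hB).symm⟩
  have hc : c ^ q = c := by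
    have hpow : (c * (y ^ q ^ s * (y ^ q + a * y))) ^ (q - 1) =
        (y ^ q ^ s * (y ^ q + a * y)) ^ (q - 1) := by
      rw [← hAB, hlin, hlin, h]
    rw [mul_pow, mul_eq_right₀ (pow_ne_zero _ hB)] at hpow
    rw [hpow_q, hpow, one_mul]
  have hzq : z ^ q = z := by
    refine pow_eq_self_of_linearized_eq hF hℓ hs ha hy hz hc ?_
    apply mul_left_cancel₀ (pow_ne_zero (q ^ s) hy)
    linear_combination hAB
  have hz1 : z ^ (q - 1) = 1 := by rwa [← mul_eq_right₀ hz, ← pow_succ, ← hq]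
  rw [mul_pow, hz1, one_mul]

end FiniteField

theorem stmt_10_general (q e : ℕ)
    (he : 2 ≤ e) (heodd : Odd e)
    {F : Type*} [Field F] [Fintype F] (hF : Fintype.card F = q ^ e)
    (a : F) (ha : a ≠ 0) (r : ℕ) (hr : 1 ≤ r)
    (ℓ : ℕ) (hℓ : ℓ = ∑ i ∈ Finset.range e, q ^ i)
    (hA : (-a) ^ ℓ ≠ 1) (hgcd : Nat.gcd r (q - 1) = 1)
    (hres : r % ℓ = q ^ ((e + 1) / 2) + 1 ∨ r % ℓ = ℓ - q ^ ((e + 1) / 2) - q) :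
    Function.Bijective (fun x : F => x ^ r * (x ^ (q - 1) + a)) := by
  set s := (e + 1) / 2
  have hs : 2 * s = e + 1 := by obtain ⟨k, rfl⟩ := heodd; omega
  have hq := one_lt_of_card_eq_pow hF
  have hunit : ∀ {x : F}, x ≠ 0 → (x ^ (q - 1)) ^ ℓ = 1 := fun hx => by
    rw [← pow_mul]
    exact pow_mul_geomSum_eq_one hF hℓ hx
  refine bijective_pow_mul_comp_pow (h := (· + a)) (by omega) hgcd
    (fun x hx => pow_sub_one_add_ne_zero hF hℓ hA hx) fun x y hx hy hxy => ?_
  rw [pow_mul_add_pow_eq_inducedMap (hunit hx), pow_mul_add_pow_eq_inducedMap (hunit hy)] at hxy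
  rcases hres with hres | hres
  · rw [hres] at hxy
    exact pow_sub_one_eq_of_inducedMap_eq hF hℓ hs hA hx hy hxy
  · have hℓs : q ^ s + q ≤ ℓ := hℓ ▸ pow_add_le_geomSum (by omega) (by omega)
    rw [hres, inducedMap_sub_eq ha (hunit hx) hq.le hℓs,
      inducedMap_sub_eq ha (hunit hy) hq.le hℓs, mul_right_inj' (pow_ne_zero _ ha),
      ← inv_pow, ← inv_pow] at hxy
    have hA' : (-a⁻¹) ^ ℓ ≠ 1 := by rwa [← inv_neg, inv_pow, inv_ne_one]
    simpa only [inv_pow, inv_inj] using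
      pow_sub_one_eq_of_inducedMap_eq hF hℓ hs hA' (inv_ne_zero hx) (inv_ne_zero hy) hxy

/-- For odd `e`, if `(-a)^ℓ ≠ 1`, `gcd(r, q-1) = 1`, and
`r mod ℓ ∈ {q^{(e+1)/2} + 1, ℓ - q^{(e+1)/2} - q}`, then `f(x) = x^r (x^{q-1} + a)`
permutes `F_{q^e}`, where `ℓ = q^{e-1} + ⋯ + q + 1`. -/
theorem stmt_10 (p m q e : ℕ) (hp : p.Prime) (hm : 0 < m) (hq : q = p ^ m)
    (he : 2 ≤ e) (heodd : Odd e)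
    {F : Type*} [Field F] [Fintype F] (hF : Fintype.card F = q ^ e)
    (a : F) (ha : a ≠ 0) (r : ℕ) (hr : 1 ≤ r)
    (ℓ : ℕ) (hℓ : ℓ = ∑ i ∈ Finset.range e, q ^ i)
    (hA : (-a) ^ ℓ ≠ 1) (hgcd : Nat.gcd r (q - 1) = 1)
    (hres : r % ℓ = q ^ ((e + 1) / 2) + 1 ∨ r % ℓ = ℓ - q ^ ((e + 1) / 2) - q) :
    Function.Bijective (fun x : F => x ^ r * (x ^ (q - 1) + a)) :=
  stmt_10_general q e he heodd hF a ha r hr ℓ hℓ hA hgcd hres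
end

section
/- Let q ≥ 3 be a prime power, e ≥ 2, a ∈ F_{q^e} nonzero, r ≥ 1, f(x) = x^r(x^{q−1} + a), and ℓ = q^{e−1} + ⋯ + q + 1. If the least nonnegative residue of r modulo ℓ is not of the form h·q + 1 for any integer h, then f does not permute F_{q^e}. -/
/-!
If `f` permuted `F = 𝔽_{q^e}`, then for `N = q^{e-1} - 1 < q^e - 1` we would have
`∑ₓ f(x)^N = ∑ₓ x^N = 0`. Expanding `f(x)^N` binomially, the term of index `k` survives the
summation over `x` only if `q^e - 1 ∣ rN + (q - 1)k`, i.e. `ℓ ∣ rn + k` where `N = (q - 1)n`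
and `ℓ = qn + 1`; as `N < ℓ` there is at most one such `k ≤ N`, and the hypothesis on `r mod ℓ`
provides one. Hence `∑ₓ f(x)^N = -a^{N-k} C(N, k)`, which is nonzero because
`C(p^L - 1, k) ≡ (-1)^k (mod p)`.
-/

open Finset

theorem Nat.cast_choose_prime_pow_sub_one {R : Type*} [Ring R] {p : ℕ} [hp : Fact p.Prime]
    [CharP R p] (L : ℕ) {k : ℕ} (hk : k < p ^ L) : ((p ^ L - 1).choose k : R) = (-1) ^ k := by
  induction k with
  | zero => simp
  | succ k ih =>
    have hpascal : (p ^ L - 1).choose k + (p ^ L - 1).choose (k + 1) = (p ^ L).choose (k + 1) := by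
      conv_rhs => rw [← Nat.sub_add_cancel (Nat.one_le_pow L p hp.out.pos)]
      exact (Nat.choose_succ_succ' _ _).symm
    have hzero : ((p ^ L).choose (k + 1) : R) = 0 :=
      (CharP.cast_eq_zero_iff R p _).mpr (hp.out.dvd_choose_pow k.succ_ne_zero hk.ne)
    rw [← hpascal, Nat.cast_add] at hzero
    rw [eq_neg_of_add_eq_zero_right hzero, ih (by omega), pow_succ, mul_neg_one]

theorem FiniteField.sum_pow_of_ne_zero_s11 {K : Type*} [Field K] [Fintype K] [DecidableEq K]
    {i : ℕ} (hi : i ≠ 0) :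
    ∑ x : K, x ^ i = if Fintype.card K - 1 ∣ i then -1 else 0 := by
  rw [← FiniteField.sum_pow_units]
  refine (sum_subset (subset_univ _) fun x _ hx => ?_).symm.trans
    (sum_map univ ⟨_, Units.val_injective⟩ (· ^ i))
  obtain rfl : x = 0 := not_not.mp fun h => hx (mem_map.mpr ⟨Units.mk0 x h, mem_univ _, rfl⟩)
  exact zero_pow hi

theorem FiniteField.sum_pow_mul_pow_add_pow_s11 {K : Type*} [Field K] [Fintype K] [DecidableEq K]
    (a : K) {r c N : ℕ} (hrN : r * N ≠ 0) :
    ∑ x : K, (x ^ r * (x ^ c + a)) ^ N =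
      -∑ k ∈ range (N + 1) with Fintype.card K - 1 ∣ r * N + c * k,
        a ^ (N - k) * (N.choose k : K) := by
  calc ∑ x : K, (x ^ r * (x ^ c + a)) ^ N
      = ∑ k ∈ range (N + 1), (∑ x : K, x ^ (r * N + c * k)) * (a ^ (N - k) * N.choose k) := by
        simp_rw [mul_pow, add_pow, mul_sum, sum_mul]
        rw [sum_comm]
        refine sum_congr rfl fun k _ => sum_congr rfl fun x _ => ?_
        ring
    _ = ∑ k ∈ range (N + 1),
          if Fintype.card K - 1 ∣ r * N + c * k then -(a ^ (N - k) * N.choose k) else 0 := by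
        refine sum_congr rfl fun k _ => ?_
        rw [sum_pow_of_ne_zero_s11 (by positivity)]
        split_ifs <;> ring
    _ = _ := by rw [← sum_filter, sum_neg_distrib]

/- Modulo `q n + 1` we have `q n ≡ -1`, so for `r ≡ q t + s` the residue of `-r n` is `t - s n`;
it lies in `[0, (q - 1) n]` unless `s = 1`. -/
theorem Nat.exists_le_dvd_mul_add {q n r : ℕ} (hq : 2 ≤ q) (hr : r % (q * n + 1) % q ≠ 1) :
    ∃ k ≤ (q - 1) * n, q * n + 1 ∣ r * n + k := by
  obtain ⟨t, s, hts, hsq, hs1⟩ : ∃ t s, q * t + s = r % (q * n + 1) ∧ s < q ∧ s ≠ 1 :=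
    ⟨_, _, Nat.div_add_mod _ _, Nat.mod_lt _ (by omega), hr⟩
  have hle : q * t + s ≤ q * n := Nat.lt_succ_iff.mp (hts ▸ Nat.mod_lt r (by omega))
  have hqn : (q - 1) * n + n = q * n := by
    rw [← Nat.succ_mul, Nat.succ_eq_add_one, Nat.sub_add_cancel (by omega)]
  suffices ∃ k ≤ (q - 1) * n, q * n + 1 ∣ (q * t + s) * n + k by
    obtain ⟨k, hk, hdvd⟩ := this
    refine ⟨k, hk, ?_⟩
    rw [hts] at hdvd
    exact ((((Nat.mod_modEq r _).mul_right n).add_right k).dvd_iff dvd_rfl).mp hdvd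
  obtain hs | hs : s = 0 ∨ 2 ≤ s := by omega
  · have htn : t ≤ n := Nat.le_of_mul_le_mul_left (by omega) (by omega : 0 < q)
    exact ⟨t, htn.trans (Nat.le_mul_of_pos_left n (by omega)), t, by rw [hs]; ring⟩
  · have htn : t < n := Nat.lt_of_mul_lt_mul_left (by omega : q * t < q * n)
    have hsn : s * n ≤ (q - 1) * n := Nat.mul_le_mul_right n (by omega)
    have h2n : 2 * n ≤ s * n := Nat.mul_le_mul_right n hs
    obtain ⟨k, hk⟩ : ∃ k, k + s * n = q * n + 1 + t := ⟨q * n + 1 + t - s * n, by omega⟩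
    refine ⟨k, by omega, t + 1, ?_⟩
    calc (q * t + s) * n + k = q * t * n + (k + s * n) := by ring
      _ = (q * n + 1) * (t + 1) := by rw [hk]; ring

theorem Nat.filter_range_dvd_add_eq_singleton {ℓ m N k₀ : ℕ} (hN : N < ℓ) (hk₀ : k₀ ≤ N)
    (h₀ : ℓ ∣ m + k₀) : {k ∈ range (N + 1) | ℓ ∣ m + k} = {k₀} := by
  ext k
  rw [mem_filter, mem_range, mem_singleton]
  constructor
  · rintro ⟨hk, h⟩
    have := (Nat.modEq_zero_iff_dvd.mpr h).trans (Nat.modEq_zero_iff_dvd.mpr h₀).symm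
    exact (Nat.ModEq.add_left_cancel' m this).eq_of_lt_of_lt (by omega) (by omega)
  · rintro rfl
    exact ⟨by omega, h₀⟩

theorem Nat.filter_pow_sub_one_dvd_eq_singleton {q d r : ℕ} (hq : 2 ≤ q)
    (hr : r % (∑ i ∈ range (d + 1), q ^ i) % q ≠ 1) :
    ∃ k₀, {k ∈ range (q ^ d - 1 + 1) | q ^ (d + 1) - 1 ∣ r * (q ^ d - 1) + (q - 1) * k} = {k₀} := by
  set n := ∑ i ∈ range d, q ^ i
  have hℓ : ∑ i ∈ range (d + 1), q ^ i = q * n + 1 := by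
    rw [sum_range_succ', mul_sum]
    simp only [pow_succ', pow_zero]
  have hN : q ^ d - 1 = (q - 1) * n := by rw [mul_comm, geom_sum_mul_of_one_le (by omega)]
  have hQ : q ^ (d + 1) - 1 = (q - 1) * (q * n + 1) := by
    rw [← hℓ, mul_comm, geom_sum_mul_of_one_le (by omega)]
  rw [hℓ] at hr
  obtain ⟨k₀, hk₀, h₀⟩ := Nat.exists_le_dvd_mul_add hq hr
  refine ⟨k₀, ?_⟩
  simp only [hN, hQ]
  calc _ = {k ∈ range ((q - 1) * n + 1) | q * n + 1 ∣ r * n + k} := filter_congr fun k _ => by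
        rw [show r * ((q - 1) * n) + (q - 1) * k = (q - 1) * (r * n + k) by ring,
          Nat.mul_dvd_mul_iff_left (by omega)]
    _ = {k₀} := Nat.filter_range_dvd_add_eq_singleton
        (Nat.lt_succ_of_le (Nat.mul_le_mul_right n (Nat.sub_le q 1))) hk₀ h₀

theorem stmt_11_general (p m q e : ℕ) (hp : p.Prime) (hq : q = p ^ m)
    (hq3 : 3 ≤ q) (he : 2 ≤ e)
    {F : Type*} [Field F] [Fintype F] (hF : Fintype.card F = q ^ e)
    (a : F) (ha : a ≠ 0) (r : ℕ) (hr : 1 ≤ r)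
    (ℓ : ℕ) (hℓ : ℓ = ∑ i ∈ Finset.range e, q ^ i)
    (hres : ∀ h : ℤ, ((r % ℓ : ℕ) : ℤ) ≠ h * q + 1) :
    ¬ Function.Bijective (fun x : F => x ^ r * (x ^ (q - 1) + a)) := by
  classical
  have : Fact p.Prime := ⟨hp⟩
  have : CharP F p := charP_of_card_eq_prime_pow (f := m * e) (by rw [hF, hq, pow_mul])
  obtain ⟨d, rfl⟩ : ∃ d, e = d + 1 := ⟨e - 1, by omega⟩
  have hres' : r % ℓ % q ≠ 1 := fun h => hres (r % ℓ / q) <| by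
    have := Nat.div_add_mod' (r % ℓ) q
    rw [h] at this
    exact_mod_cast this.symm
  obtain ⟨k₀, hfilter⟩ := Nat.filter_pow_sub_one_dvd_eq_singleton (by omega) (hℓ ▸ hres')
  have hqd : 1 < q ^ d := Nat.one_lt_pow (by omega) (by omega)
  have hqd' : q ^ d < q ^ (d + 1) := Nat.pow_lt_pow_right (by omega) (by omega)
  have hk₀ : k₀ < q ^ d := by
    have := (mem_filter.mp (hfilter ▸ mem_singleton_self k₀)).1
    rwa [mem_range, Nat.sub_add_cancel hqd.le] at this
  have hchoose : ((q ^ d - 1).choose k₀ : F) = (-1) ^ k₀ := by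
    rw [hq, ← pow_mul] at hk₀ ⊢
    exact Nat.cast_choose_prime_pow_sub_one _ hk₀
  intro hbij
  have hsum : (0 : F) = -(a ^ (q ^ d - 1 - k₀) * (-1) ^ k₀) := calc
    0 = ∑ x : F, x ^ (q ^ d - 1) :=
        (FiniteField.sum_pow_lt_card_sub_one _ _ (by omega)).symm
    _ = ∑ x : F, (x ^ r * (x ^ (q - 1) + a)) ^ (q ^ d - 1) :=
        (Fintype.sum_bijective _ hbij _ _ fun _ => rfl).symm
    _ = -(a ^ (q ^ d - 1 - k₀) * (-1) ^ k₀) := by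
        rw [FiniteField.sum_pow_mul_pow_add_pow_s11 a (Nat.mul_ne_zero (by omega) (by omega)), hF,
          hfilter, sum_singleton, hchoose]
  simp [ha] at hsum

/-- If the least nonnegative residue of `r` modulo `ℓ = q^{e-1} + ⋯ + q + 1` is not of
the form `hq + 1` for any integer `h`, then `f(x) = x^r (x^{q-1} + a)` does not permute
`F_{q^e}`. -/
theorem stmt_11 (p m q e : ℕ) (hp : p.Prime) (hm : 0 < m) (hq : q = p ^ m)
    (hq3 : 3 ≤ q) (he : 2 ≤ e)
    {F : Type*} [Field F] [Fintype F] (hF : Fintype.card F = q ^ e)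
    (a : F) (ha : a ≠ 0) (r : ℕ) (hr : 1 ≤ r)
    (ℓ : ℕ) (hℓ : ℓ = ∑ i ∈ Finset.range e, q ^ i)
    (hres : ∀ h : ℤ, ((r % ℓ : ℕ) : ℤ) ≠ h * q + 1) :
    ¬ Function.Bijective (fun x : F => x ^ r * (x ^ (q - 1) + a)) :=
  stmt_11_general p m q e hp hq hq3 he hF a ha r hr ℓ hℓ hres
end

section
/- Let q ≥ 3 be a prime power, e ≥ 2 even, a ∈ F_{q^e} nonzero, r ≥ 1, f(x) = x^r(x^{q−1} + a), and ℓ = q^{e−1} + ⋯ + q + 1. If the least nonnegative residue of r modulo ℓ equals h·q + 1 for some nonnegative integer h with (q+1) ∤ h, then f does not permute F_{q^e}. -/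
/-!
Hermite's criterion with the exponent `k = (q - 1) L`, where `e = 2t`, `L = ∑_{i<t} q^{2i}` and
`ℓ = (q + 1) L`. If `f` permuted `F_{q^e}` then `∑ f(x)^k = ∑ x^k = 0`, as `0 < k < q^e - 1`.
Expanding `f(x)^k` binomially and using that `∑ x^n` is `-1` or `0` according as `q^e - 1` divides
`n` or not, exactly one term survives, `j = bL` with `b ≡ h - 1 (mod q + 1)`; since `(q+1) ∤ h`,
`b < q`. Hence `∑ f(x)^k = -C(k, bL) a^{k - bL}`, and Lucas' theorem in base `q²` gives
`C((q-1)L, bL) ≡ C(q-1, b)^t ≡ ±1 (mod p)`, a contradiction.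
-/

open Finset

theorem geom_sum_two_mul {R : Type*} [CommSemiring R] (x : R) (t : ℕ) :
    ∑ i ∈ range (2 * t), x ^ i = (x + 1) * ∑ i ∈ range t, (x ^ 2) ^ i := by
  induction t with
  | zero => simp
  | succ t ih =>
    rw [Nat.mul_succ, sum_range_succ, sum_range_succ, ih, sum_range_succ]
    ring

namespace FiniteField

variable {K : Type*} [Field K] [Fintype K]

theorem sum_pow_of_pos {i : ℕ} (hi : 0 < i) :
    ∑ x : K, x ^ i = if Fintype.card K - 1 ∣ i then -1 else 0 := by
  classical
  rw [← sum_pow_units K i, Fintype.sum_eq_add_sum_compl 0, zero_pow hi.ne', zero_add,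
    sum_subtype _ (p := (· ≠ (0 : K))) (by simp)]
  exact Fintype.sum_equiv unitsEquivNeZero.symm _ _ fun _ => rfl

theorem sum_pow_mul_pow_add_pow_s12 (r d k : ℕ) (a : K) :
    ∑ x : K, (x ^ r * (x ^ d + a)) ^ k =
      ∑ j ∈ range (k + 1), a ^ (k - j) * k.choose j * ∑ x : K, x ^ (r * k + j * d) := by
  simp_rw [mul_pow, add_pow, mul_sum]
  rw [sum_comm]
  refine sum_congr rfl fun j _ => sum_congr rfl fun x _ => ?_
  ring

theorem not_bijective_pow_mul_pow_add {a : K} (ha : a ≠ 0) {r d k j₀ : ℕ} (hr : 0 < r)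
    (hk : 0 < k) (hkq : k < Fintype.card K - 1) (hj₀ : j₀ ≤ k)
    (hdvd : ∀ j ≤ k, Fintype.card K - 1 ∣ r * k + j * d ↔ j = j₀)
    (hC : (k.choose j₀ : K) ≠ 0) :
    ¬ Function.Bijective fun x : K => x ^ r * (x ^ d + a) := by
  intro hbij
  have hsum : ∑ x : K, (x ^ r * (x ^ d + a)) ^ k = ∑ x : K, x ^ k :=
    Fintype.sum_bijective _ hbij _ _ fun _ => rfl
  have hterm : ∀ j ∈ range (k + 1), a ^ (k - j) * k.choose j * ∑ x : K, x ^ (r * k + j * d) =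
      if j₀ = j then -(a ^ (k - j₀) * k.choose j₀) else 0 := by
    intro j hj
    have hjk : j ≤ k := Nat.lt_succ_iff.mp (mem_range.mp hj)
    rw [sum_pow_of_pos (Nat.add_pos_left (Nat.mul_pos hr hk) _)]
    rcases eq_or_ne j j₀ with rfl | hne
    · simp [(hdvd j hjk).mpr rfl]
    · simp [mt (hdvd j hjk).mp hne, hne.symm]
  rw [sum_pow_mul_pow_add_pow_s12, sum_congr rfl hterm, sum_ite_eq,
    if_pos (mem_range.mpr (Nat.lt_succ_of_le hj₀)), sum_pow_lt_card_sub_one K k hkq,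
    neg_eq_zero] at hsum
  exact mul_ne_zero (pow_ne_zero _ ha) hC hsum

end FiniteField

section CharP

variable {R : Type*} [CommRing R] {p : ℕ} [hp : Fact p.Prime] [CharP R p]

theorem choose_prime_pow_sub_one_cast {a b : ℕ} (hb : b < p ^ a) :
    ((p ^ a - 1).choose b : R) = (-1) ^ b := by
  induction b with
  | zero => simp
  | succ b ih =>
    have hpascal : (p ^ a).choose (b + 1) = (p ^ a - 1).choose b + (p ^ a - 1).choose (b + 1) := by
      rw [← Nat.choose_succ_succ', Nat.sub_add_cancel (by omega)]
    have hvanish : ((p ^ a).choose (b + 1) : R) = 0 :=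
      (CharP.cast_eq_zero_iff R p _).mpr (hp.out.dvd_choose_pow (by omega) (by omega))
    rw [hpascal, Nat.cast_add, ih (by omega)] at hvanish
    linear_combination hvanish

theorem choose_cast_eq_choose_mod_mul_choose_div (a n k : ℕ) :
    (n.choose k : R) = (n % p ^ a).choose (k % p ^ a) * (n / p ^ a).choose (k / p ^ a) := by
  have hdigit : ∀ m, ∀ i ∈ range a, m % p ^ a / p ^ i % p = m / p ^ i % p := by
    intro m i hi
    rw [← Nat.sub_add_cancel (mem_range.mp hi).le, pow_add, Nat.mod_mul_left_div_self,
      Nat.mod_mod_of_dvd _ (dvd_pow_self p (Nat.sub_ne_zero_of_lt (mem_range.mp hi)))]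
  have hlucas := (CharP.intCast_eq_intCast R p).mpr
    (Choose.choose_modEq_choose_mul_prod_range_choose (p := p) (n := n) (k := k) a)
  have hlow := (CharP.intCast_eq_intCast R p).mpr (Choose.choose_modEq_prod_range_choose (p := p)
    (Nat.mod_lt n (pow_pos hp.out.pos a)) (Nat.mod_lt k (pow_pos hp.out.pos a)))
  push_cast at hlucas hlow
  rw [hlucas, hlow, mul_comm]
  congr 1
  exact prod_congr rfl fun i hi => by rw [hdigit n i hi, hdigit k i hi]

theorem choose_mul_geom_sum_cast {a n₀ k₀ : ℕ} (hn : n₀ < p ^ a) (hk : k₀ < p ^ a) (t : ℕ) :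
    ((n₀ * ∑ i ∈ range t, (p ^ a) ^ i).choose (k₀ * ∑ i ∈ range t, (p ^ a) ^ i) : R) =
      (n₀.choose k₀ : R) ^ t := by
  induction t with
  | zero => simp
  | succ t ih =>
    have hQ : 0 < p ^ a := pow_pos hp.out.pos a
    have hsplit : ∀ c, c * ∑ i ∈ range (t + 1), (p ^ a) ^ i =
        c + p ^ a * (c * ∑ i ∈ range t, (p ^ a) ^ i) := fun c => by rw [geom_sum_succ]; ring
    rw [hsplit, hsplit, choose_cast_eq_choose_mod_mul_choose_div a, Nat.add_mul_mod_self_left,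
      Nat.add_mul_mod_self_left, Nat.add_mul_div_left _ _ hQ, Nat.add_mul_div_left _ _ hQ,
      Nat.mod_eq_of_lt hn, Nat.mod_eq_of_lt hk, Nat.div_eq_of_lt hn, Nat.div_eq_of_lt hk,
      zero_add, zero_add, ih, pow_succ']

end CharP

theorem add_mod_add_one_lt_of_not_dvd {q h : ℕ} (hh : ¬ q + 1 ∣ h) : (h + q) % (q + 1) < q := by
  refine lt_of_le_of_ne (Nat.lt_succ_iff.mp (Nat.mod_lt _ q.succ_pos)) fun heq => hh ?_
  have hcast := congrArg (Nat.cast : ℕ → ZMod (q + 1)) heq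
  rw [ZMod.natCast_mod, Nat.cast_add, add_eq_right] at hcast
  exact (ZMod.natCast_eq_zero_iff h (q + 1)).mp hcast

theorem dvd_add_add_mod_add_one {q L r h : ℕ} (hres : r % ((q + 1) * L) = h * q + 1) :
    q + 1 ∣ r + (h + q) % (q + 1) := by
  rw [← ZMod.natCast_eq_zero_iff, Nat.cast_add, ZMod.natCast_mod,
    ← ZMod.natCast_mod r (q + 1), ← Nat.mod_mod_of_dvd r (dvd_mul_right (q + 1) L), hres,
    ZMod.natCast_mod]
  have hq : ((q + 1 : ℕ) : ZMod (q + 1)) = 0 := ZMod.natCast_self _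
  push_cast at hq ⊢
  linear_combination (h + 1 : ZMod (q + 1)) * hq

theorem dvd_mul_add_mul_iff {q L r h j : ℕ} (hq : 2 ≤ q) (hL : 0 < L)
    (hres : r % ((q + 1) * L) = h * q + 1) (hj : j ≤ (q - 1) * L) :
    (q - 1) * ((q + 1) * L) ∣ r * ((q - 1) * L) + j * (q - 1) ↔ j = (h + q) % (q + 1) * L := by
  have hfactor : r * ((q - 1) * L) + j * (q - 1) = (q - 1) * (r * L + j) := by ring
  rw [hfactor, Nat.mul_dvd_mul_iff_left (by omega)]
  have hb : (q + 1) * L ∣ r * L + (h + q) % (q + 1) * L := by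
    rw [← add_mul]
    exact Nat.mul_dvd_mul_right (dvd_add_add_mod_add_one hres) L
  refine ⟨fun hd => ?_, fun hjb => hjb ▸ hb⟩
  have hmod := ((Nat.modEq_zero_iff_dvd.mpr hd).trans (Nat.modEq_zero_iff_dvd.mpr hb).symm)
  refine (Nat.ModEq.add_left_cancel' _ hmod).eq_of_lt_of_lt ?_ ?_
  · exact hj.trans_lt (Nat.mul_lt_mul_of_pos_right (by omega) hL)
  · exact Nat.mul_lt_mul_of_pos_right (Nat.mod_lt _ q.succ_pos) hL

theorem stmt_12_general (p m q e : ℕ) (hp : p.Prime) (hq : q = p ^ m)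
    (hq3 : 3 ≤ q) (he : 2 ≤ e) (heven : Even e)
    {F : Type*} [Field F] [Fintype F] (hF : Fintype.card F = q ^ e)
    (a : F) (ha : a ≠ 0) (r : ℕ) (hr : 1 ≤ r)
    (ℓ : ℕ) (hℓ : ℓ = ∑ i ∈ Finset.range e, q ^ i)
    (h : ℕ) (hres : r % ℓ = h * q + 1) (hnd : ¬ (q + 1) ∣ h) :
    ¬ Function.Bijective (fun x : F => x ^ r * (x ^ (q - 1) + a)) := by
  have : Fact p.Prime := ⟨hp⟩
  have : CharP F p := charP_of_card_eq_prime_pow (hF.trans (by rw [hq, ← pow_mul]))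
  obtain ⟨t, rfl⟩ := heven
  set L := ∑ i ∈ range t, (q ^ 2) ^ i with hL
  have hℓL : ℓ = (q + 1) * L := by rw [hℓ, ← two_mul, geom_sum_two_mul]
  have hcard : Fintype.card F - 1 = (q - 1) * ((q + 1) * L) := by
    rw [hF, ← geom_sum_mul_of_one_le (by omega), ← hℓ, hℓL, mul_comm]
  have hLpos : 0 < L := sum_pos (fun i _ => by positivity) (nonempty_range_iff.mpr (by omega))
  have hb : (h + q) % (q + 1) < q := add_mod_add_one_lt_of_not_dvd hnd
  set b := (h + q) % (q + 1)
  rw [hℓL] at hres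
  refine FiniteField.not_bijective_pow_mul_pow_add (k := (q - 1) * L) (j₀ := b * L) ha hr
    (Nat.mul_pos (by omega) hLpos) ?_ (Nat.mul_le_mul_right _ (Nat.le_sub_one_of_lt hb))
    (fun j hj => hcard ▸ dvd_mul_add_mul_iff (by omega) hLpos hres hj) ?_
  · rw [hcard, mul_left_comm]
    exact lt_mul_of_one_lt_left (Nat.mul_pos (by omega) hLpos) (by omega)
  · have hQ : q ^ 2 = p ^ (m * 2) := by rw [hq, ← pow_mul]
    have hqQ : q ≤ q ^ 2 := Nat.le_self_pow two_ne_zero q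
    have hcentral : ((q - 1).choose b : F) = (-1) ^ b := by
      simpa only [← hq] using choose_prime_pow_sub_one_cast (R := F) (a := m) (b := b) (by omega)
    rw [hL, hQ, choose_mul_geom_sum_cast (by omega) (by omega), hcentral]
    exact pow_ne_zero _ (pow_ne_zero _ (neg_ne_zero.mpr one_ne_zero))

/-- For even `e` and `q ≥ 3`, if the least nonnegative residue of `r` modulo
`ℓ = q^{e-1} + ⋯ + q + 1` equals `hq + 1` with `(q+1) ∤ h`, then
`f(x) = x^r (x^{q-1} + a)` does not permute `F_{q^e}`. -/
theorem stmt_12 (p m q e : ℕ) (hp : p.Prime) (hm : 0 < m) (hq : q = p ^ m)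
    (hq3 : 3 ≤ q) (he : 2 ≤ e) (heven : Even e)
    {F : Type*} [Field F] [Fintype F] (hF : Fintype.card F = q ^ e)
    (a : F) (ha : a ≠ 0) (r : ℕ) (hr : 1 ≤ r)
    (ℓ : ℕ) (hℓ : ℓ = ∑ i ∈ Finset.range e, q ^ i)
    (h : ℕ) (hres : r % ℓ = h * q + 1) (hnd : ¬ (q + 1) ∣ h) :
    ¬ Function.Bijective (fun x : F => x ^ r * (x ^ (q - 1) + a)) :=
  stmt_12_general p m q e hp hq hq3 he heven hF a ha r hr ℓ hℓ h hres hnd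
end

section
/- Let q ≥ 3 be a prime power and e ≥ 3, let ℓ = q^{e−1} + ⋯ + q + 1, and suppose r = h(ℓ − q^{e−1} − 1) + 1 for some integer h with 1 ≤ h ≤ q − 1. Let N = 2q^{e−1} − q^{e−2} − 1 (note (q−1) | N), let j = 2h·q^{e−3} + h·Σ_{i=0}^{e−4} q^i, and for an integer i set A_i = i·ℓ − rN/(q−1). Then S_N = {A_{j+1}} if h = 1; S_N = {A_j, A_{j+1}} if 2 ≤ h ≤ q − 2; and S_N = {A_j} if h = q − 1. Moreover A_j = (h−2)q^{e−2} + (2h−1)q^{e−3} + (h−1)·Σ_{i=0}^{e−4} q^i and A_{j+1} = q^{e−1} + (h−1)q^{e−2} + 2h·q^{e−3} + h·Σ_{i=0}^{e−4} q^i. -/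
/-!
Write `Q = q^{e-3}` and `s = Σ_{i<e-3} q^i`, so that `(q - 1) s = Q - 1`,
`ℓ = s + Q + Qq + Qq²` and `N = (q - 1)(s + Q + 2Qq)`. Hence `rN/(q-1)` is an integer and
`i ↦ A_i` is the arithmetic progression of difference `ℓ` through
`A_j = (h - 1)(s + 2Q + Qq) - (q - 1)Q` and `A_{j+1} = A_j + ℓ`, with
`N - A_{j+1} = (q - 1 - h)(s + Q + Qq) - hQ`. So `A_{j-1} < 0`, `A_{j+2} > N`, and of the two
middle terms `A_j ≥ 0` exactly when `h ≥ 2` and `A_{j+1} ≤ N` exactly when `h ≤ q - 2`.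
-/

open Finset

theorem setOf_strictMono_mem_Icc_eq_image {α : Type*} [LinearOrder α] {A : ℤ → α}
    (hA : StrictMono A) {lo hi : α} {a b : ℤ} (ha : A (a - 1) < lo) (ha' : lo ≤ A a)
    (hb : A b ≤ hi) (hb' : hi < A (b + 1)) :
    {x | lo ≤ x ∧ x ≤ hi ∧ ∃ i, x = A i} = A '' Set.Icc a b := by
  ext x
  constructor
  · rintro ⟨hlo, hhi, i, rfl⟩
    have := hA.lt_iff_lt.mp (ha.trans_le hlo)
    have := hA.lt_iff_lt.mp (hhi.trans_lt hb')
    exact ⟨i, ⟨by omega, by omega⟩, rfl⟩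
  · rintro ⟨i, ⟨hai, hib⟩, rfl⟩
    exact ⟨ha'.trans (hA.monotone hai), (hA.monotone hib).trans hb, i, rfl⟩

theorem Int.Icc_self_add_one (j : ℤ) : Set.Icc j (j + 1) = {j, j + 1} := by
  ext i
  simp only [Set.mem_Icc, Set.mem_insert_iff, Set.mem_singleton_iff]
  omega

theorem geom_sum_range_add_three (q : ℤ) (m : ℕ) :
    ∑ i ∈ range (m + 3), q ^ i =
      ∑ i ∈ range m, q ^ i + q ^ m + q ^ m * q + q ^ m * q ^ 2 := by
  simp only [sum_range_succ]
  ring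

section Window

-- With `Q = q^{e-3}` and `s = Σ_{i<e-3} q^i`, the polynomials below are `A_j`, `A_{j+1}`, `ℓ`
-- and `N`.
variable {q Q s h : ℤ}

theorem aj_lt_ell (hq : 3 ≤ q) (hQ : 1 ≤ Q) (hgeom : (q - 1) * s = Q - 1) (hs : 0 ≤ s)
    (hh : h ≤ q - 1) :
    (h - 2) * (Q * q) + (2 * h - 1) * Q + (h - 1) * s < s + Q + Q * q + Q * q ^ 2 := by
  nlinarith [mul_nonneg (sub_nonneg.2 hh) (by nlinarith : (0 : ℤ) ≤ s + 2 * Q + Q * q)]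

theorem aj_nonneg_iff (hq : 3 ≤ q) (hQ : 1 ≤ Q) (hs : 0 ≤ s) (hh : 1 ≤ h) :
    0 ≤ (h - 2) * (Q * q) + (2 * h - 1) * Q + (h - 1) * s ↔ 2 ≤ h := by
  constructor
  · intro H
    by_contra H'
    obtain rfl : h = 1 := by omega
    nlinarith
  · intro H
    nlinarith [mul_nonneg (sub_nonneg.2 H) (by nlinarith : (0 : ℤ) ≤ s + 2 * Q + Q * q)]

theorem aj_le_N (hq : 3 ≤ q) (hQ : 1 ≤ Q) (hgeom : (q - 1) * s = Q - 1) (hs : 0 ≤ s)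
    (hh : h ≤ q - 1) :
    (h - 2) * (Q * q) + (2 * h - 1) * Q + (h - 1) * s ≤ 2 * (Q * q ^ 2) - Q * q - 1 := by
  nlinarith [mul_nonneg (sub_nonneg.2 hh) (by nlinarith : (0 : ℤ) ≤ s + 2 * Q + Q * q)]

theorem aj1_nonneg (hq : 3 ≤ q) (hQ : 1 ≤ Q) (hs : 0 ≤ s) (hh : 0 ≤ h) :
    0 ≤ Q * q ^ 2 + (h - 1) * (Q * q) + 2 * h * Q + h * s := by
  have hQq : 0 ≤ Q * q := by nlinarith
  nlinarith [mul_nonneg hh hQq, mul_nonneg hh hs, mul_nonneg hh (by linarith : (0 : ℤ) ≤ Q)]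

theorem aj1_le_N_iff (hq : 3 ≤ q) (hQ : 1 ≤ Q) (hgeom : (q - 1) * s = Q - 1) (hs : 0 ≤ s)
    (hh : h ≤ q - 1) :
    Q * q ^ 2 + (h - 1) * (Q * q) + 2 * h * Q + h * s ≤ 2 * (Q * q ^ 2) - Q * q - 1 ↔
      h ≤ q - 2 := by
  have key : 2 * (Q * q ^ 2) - Q * q - 1 - (Q * q ^ 2 + (h - 1) * (Q * q) + 2 * h * Q + h * s)
      = (q - 1 - h) * (s + Q + Q * q) - h * Q := by
    linear_combination -hgeom
  constructor
  · intro H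
    by_contra H'
    obtain rfl : h = q - 1 := by omega
    nlinarith
  · intro H
    nlinarith [mul_nonneg (by linarith : (0 : ℤ) ≤ q - 2 - h)
      (by nlinarith : (0 : ℤ) ≤ s + Q + Q * q)]

theorem N_lt_aj1_add_ell (hq : 3 ≤ q) (hQ : 1 ≤ Q) (hs : 0 ≤ s) (hh : 0 ≤ h) :
    2 * (Q * q ^ 2) - Q * q - 1 <
      Q * q ^ 2 + (h - 1) * (Q * q) + 2 * h * Q + h * s + (s + Q + Q * q + Q * q ^ 2) := by
  have hQq : 0 ≤ Q * q := by nlinarith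
  nlinarith [mul_nonneg hh hQq, mul_nonneg hh hs, mul_nonneg hh (by linarith : (0 : ℤ) ≤ Q)]

end Window

theorem progression_window_eq {q h : ℕ} {Q s j : ℤ} {A : ℤ → ℤ} (hq : 3 ≤ q)
    (hQ : 1 ≤ Q) (hgeom : ((q : ℤ) - 1) * s = Q - 1) (hs : 0 ≤ s) (hh1 : 1 ≤ h) (hh2 : h ≤ q - 1)
    (hstep : ∀ i, A (i + 1) = A i + (s + Q + Q * q + Q * q ^ 2))
    (hAj : A j = (h - 2) * (Q * q) + (2 * h - 1) * Q + (h - 1) * s) :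
    {x | 0 ≤ x ∧ x ≤ 2 * (Q * q ^ 2) - Q * q - 1 ∧ ∃ i, x = A i} =
      if h = 1 then {A (j + 1)} else if h = q - 1 then {A j} else {A j, A (j + 1)} := by
  have hq' : (3 : ℤ) ≤ q := by exact_mod_cast hq
  have hmono : StrictMono A := strictMono_int_of_lt_succ fun i => by
    have hQq : 0 < Q * q := mul_pos (by omega) (by omega)
    rw [hstep]; nlinarith [mul_pos hQq (show (0 : ℤ) < q by omega)]
  have hAj1 : A (j + 1) = Q * q ^ 2 + (h - 1) * (Q * q) + 2 * h * Q + h * s := by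
    rw [hstep, hAj]; ring
  have hprev : A (j - 1) < 0 := by
    have := hstep (j - 1)
    rw [sub_add_cancel, hAj] at this
    linarith [aj_lt_ell hq' hQ hgeom hs (h := h) (by omega)]
  have hnext : 2 * (Q * q ^ 2) - Q * q - 1 < A (j + 1 + 1) := by
    rw [hstep, hAj1]
    exact N_lt_aj1_add_ell hq' hQ hs (by omega)
  have hj_nonneg_iff : 0 ≤ A j ↔ 2 ≤ (h : ℤ) := hAj ▸ aj_nonneg_iff hq' hQ hs (by omega)
  have hj1_le_iff : A (j + 1) ≤ 2 * (Q * q ^ 2) - Q * q - 1 ↔ (h : ℤ) ≤ q - 2 :=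
    hAj1 ▸ aj1_le_N_iff hq' hQ hgeom hs (by omega)
  split_ifs with h_eq_one h_eq_top
  · have hj_neg : A (j + 1 - 1) < 0 := by
      rw [add_sub_cancel_right]
      exact not_le.1 (mt hj_nonneg_iff.1 (by omega))
    rw [setOf_strictMono_mem_Icc_eq_image hmono (a := j + 1) (b := j + 1) hj_neg
      (hAj1 ▸ aj1_nonneg hq' hQ hs (by omega)) (hj1_le_iff.2 (by omega)) hnext, Set.Icc_self,
      Set.image_singleton]
  · rw [setOf_strictMono_mem_Icc_eq_image hmono (a := j) (b := j) hprev
      (hj_nonneg_iff.2 (by omega)) (hAj ▸ aj_le_N hq' hQ hgeom hs (by omega))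
      (not_le.1 (mt hj1_le_iff.1 (by omega))), Set.Icc_self, Set.image_singleton]
  · rw [setOf_strictMono_mem_Icc_eq_image hmono (a := j) (b := j + 1) hprev
      (hj_nonneg_iff.2 (by omega)) (hj1_le_iff.2 (by omega)) hnext, Int.Icc_self_add_one,
      Set.image_pair]

theorem stmt_14_general (q e h : ℕ)
    (hq3 : 3 ≤ q) (he : 3 ≤ e) (hh1 : 1 ≤ h) (hh2 : h ≤ q - 1)
    (ℓ r N : ℤ) (hℓ : ℓ = ∑ i ∈ Finset.range e, (q : ℤ) ^ i)
    (hr : r = h * (ℓ - (q : ℤ) ^ (e - 1) - 1) + 1)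
    (hN : N = 2 * (q : ℤ) ^ (e - 1) - (q : ℤ) ^ (e - 2) - 1)
    (j : ℤ) (hj : j = 2 * h * (q : ℤ) ^ (e - 3) + h * ∑ i ∈ Finset.range (e - 3), (q : ℤ) ^ i)
    (A : ℤ → ℤ) (hA : ∀ i : ℤ, A i = i * ℓ - r * N / ((q : ℤ) - 1))
    (S : Set ℤ) (hS : S = {x : ℤ | 0 ≤ x ∧ x ≤ N ∧ ∃ i : ℤ, x = A i}) :
    ((q : ℤ) - 1) ∣ N ∧
    A j = (h - 2) * (q : ℤ) ^ (e - 2) + (2 * h - 1) * (q : ℤ) ^ (e - 3) +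
        (h - 1) * ∑ i ∈ Finset.range (e - 3), (q : ℤ) ^ i ∧
    A (j + 1) = (q : ℤ) ^ (e - 1) + (h - 1) * (q : ℤ) ^ (e - 2) +
        2 * h * (q : ℤ) ^ (e - 3) + h * ∑ i ∈ Finset.range (e - 3), (q : ℤ) ^ i ∧
    S = if h = 1 then {A (j + 1)} else if h = q - 1 then {A j} else {A j, A (j + 1)} := by
  obtain ⟨m, rfl⟩ : ∃ m, e = m + 3 := ⟨e - 3, by omega⟩
  rw [geom_sum_range_add_three] at hℓ
  simp only [Nat.add_sub_cancel, show m + 3 - 1 = m + 2 from rfl, show m + 3 - 2 = m + 1 from rfl,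
    pow_add, pow_one] at hr hN hj ⊢
  set Q : ℤ := (q : ℤ) ^ m
  set s : ℤ := ∑ i ∈ range m, (q : ℤ) ^ i
  have hQ : 1 ≤ Q := one_le_pow₀ (by omega)
  have hgeom : ((q : ℤ) - 1) * s = Q - 1 := by rw [mul_comm]; exact geom_sum_mul _ _
  have hNfac : N = (q - 1) * (s + Q + 2 * Q * q) := by rw [hN]; linear_combination -hgeom
  have hAform : ∀ i, A i = i * ℓ - r * (s + Q + 2 * Q * q) := fun i => by
    rw [hA, hNfac, mul_left_comm, Int.mul_ediv_cancel_left _ (by omega)]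
  have hstep : ∀ i, A (i + 1) = A i + ℓ := fun i => by rw [hAform, hAform]; ring
  have hAj : A j = (h - 2) * (Q * q) + (2 * h - 1) * Q + (h - 1) * s := by
    rw [hAform, hj, hr, hℓ]; linear_combination (h * Q * (q - 1)) * hgeom
  refine ⟨⟨_, hNfac⟩, hAj, by rw [hstep, hAj, hℓ]; ring, ?_⟩
  rw [hS, hN]
  exact progression_window_eq hq3 hQ hgeom (sum_nonneg fun i _ => by positivity) hh1 hh2
    (hℓ ▸ hstep) hAj

/-- Description of the set `S_N` for `N = 2q^{e-1} - q^{e-2} - 1` and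
`r = h(ℓ - q^{e-1} - 1) + 1` with `1 ≤ h ≤ q - 1`, together with the values of
`A_j` and `A_{j+1}`, where `A_i = iℓ - rN/(q-1)` and
`j = 2h q^{e-3} + h Σ_{i=0}^{e-4} q^i`. -/
theorem stmt_14 (p n q e h : ℕ) (hp : p.Prime) (hn : 0 < n) (hq : q = p ^ n)
    (hq3 : 3 ≤ q) (he : 3 ≤ e) (hh1 : 1 ≤ h) (hh2 : h ≤ q - 1)
    (ℓ r N : ℤ) (hℓ : ℓ = ∑ i ∈ Finset.range e, (q : ℤ) ^ i)
    (hr : r = h * (ℓ - (q : ℤ) ^ (e - 1) - 1) + 1)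
    (hN : N = 2 * (q : ℤ) ^ (e - 1) - (q : ℤ) ^ (e - 2) - 1)
    (j : ℤ) (hj : j = 2 * h * (q : ℤ) ^ (e - 3) + h * ∑ i ∈ Finset.range (e - 3), (q : ℤ) ^ i)
    (A : ℤ → ℤ) (hA : ∀ i : ℤ, A i = i * ℓ - r * N / ((q : ℤ) - 1))
    (S : Set ℤ) (hS : S = {x : ℤ | 0 ≤ x ∧ x ≤ N ∧ ∃ i : ℤ, x = A i}) :
    ((q : ℤ) - 1) ∣ N ∧
    A j = (h - 2) * (q : ℤ) ^ (e - 2) + (2 * h - 1) * (q : ℤ) ^ (e - 3) +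
        (h - 1) * ∑ i ∈ Finset.range (e - 3), (q : ℤ) ^ i ∧
    A (j + 1) = (q : ℤ) ^ (e - 1) + (h - 1) * (q : ℤ) ^ (e - 2) +
        2 * h * (q : ℤ) ^ (e - 3) + h * ∑ i ∈ Finset.range (e - 3), (q : ℤ) ^ i ∧
    S = if h = 1 then {A (j + 1)} else if h = q - 1 then {A j} else {A j, A (j + 1)} :=
  stmt_14_general q e h hq3 he hh1 hh2 ℓ r N hℓ hr hN j hj A hA S hS
end

section
/- Let q be a prime power, e ≥ 2, r ≥ 1, and let ξ be a primitive element (a generator of the multiplicative group) of F_{q^e}. For an integer m, let f_m(x) = x^r(x^{q−1} + ξ^m). If f_j does not permute F_{q^e} for every j with 0 ≤ j < q − 1, then f_m does not permute F_{q^e} for every m with 0 ≤ m < q^e − 1. -/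
/-!
Write `m = j + (q - 1) k` with `j < q - 1`. Substituting `x ↦ ξ^k x` in `f_m` gives
`f_m(ξ^k x) = ξ^{k(r + q - 1)} f_j(x)`, so `f_m` and `f_j` are bijective together.
-/

open Function

section
variable {F : Type*} [Field F]

theorem pow_mul_pow_add_mul_pow_comp_mul (r n : ℕ) (a c : F) :
    (fun x : F => x ^ r * (x ^ n + a * c ^ n)) ∘ (c * ·) =
      (c ^ (r + n) * ·) ∘ fun x : F => x ^ r * (x ^ n + a) := by
  funext x
  simp only [comp_apply]
  ring

theorem bijective_pow_mul_pow_add_mul_pow_iff (r n : ℕ) (a : F) {c : F} (hc : c ≠ 0) :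
    Bijective (fun x : F => x ^ r * (x ^ n + a * c ^ n)) ↔
      Bijective (fun x : F => x ^ r * (x ^ n + a)) := by
  rw [← (mulLeft_bijective₀ c hc).of_comp_iff, pow_mul_pow_add_mul_pow_comp_mul,
    (mulLeft_bijective₀ _ (pow_ne_zero _ hc)).of_comp_iff']

end

theorem stmt_19_general (q e : ℕ) {F : Type*} [Field F]
    (r : ℕ) (ξ : F) (hξ : orderOf ξ = q ^ e - 1)
    (hyp : ∀ j : ℕ, j < q - 1 →
      ¬ Function.Bijective (fun x : F => x ^ r * (x ^ (q - 1) + ξ ^ j))) :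
    ∀ m : ℕ, m < q ^ e - 1 →
      ¬ Function.Bijective (fun x : F => x ^ r * (x ^ (q - 1) + ξ ^ m)) := by
  intro m hm
  have hq : 0 < q - 1 := by
    by_contra! hq1
    have : q ^ e ≤ 1 := pow_le_one₀ (Nat.zero_le q) (by omega)
    omega
  have hξ0 : ξ ≠ 0 := by
    rintro rfl
    rw [orderOf_zero] at hξ
    omega
  have hsplit : ξ ^ m = ξ ^ (m % (q - 1)) * (ξ ^ (m / (q - 1))) ^ (q - 1) := by
    rw [← pow_mul, ← pow_add, mul_comm, Nat.mod_add_div]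
  rw [hsplit, bijective_pow_mul_pow_add_mul_pow_iff _ _ _ (pow_ne_zero _ hξ0)]
  exact hyp _ (Nat.mod_lt m hq)

/-- Let `ξ` be a primitive element of `F_{q^e}` and `f_m(x) = x^r (x^{q-1} + ξ^m)`.
If `f_j` does not permute `F_{q^e}` for all `0 ≤ j < q - 1`, then `f_m` does not
permute `F_{q^e}` for all `0 ≤ m < q^e - 1`. -/
theorem stmt_19 (p mexp q e : ℕ) (hp : p.Prime) (hmexp : 0 < mexp) (hq : q = p ^ mexp)
    (he : 2 ≤ e) {F : Type*} [Field F] [Fintype F] (hF : Fintype.card F = q ^ e)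
    (r : ℕ) (hr : 1 ≤ r) (ξ : F) (hξ : orderOf ξ = q ^ e - 1)
    (hyp : ∀ j : ℕ, j < q - 1 →
      ¬ Function.Bijective (fun x : F => x ^ r * (x ^ (q - 1) + ξ ^ j))) :
    ∀ m : ℕ, m < q ^ e - 1 →
      ¬ Function.Bijective (fun x : F => x ^ r * (x ^ (q - 1) + ξ ^ m)) :=
  stmt_19_general q e r ξ hξ hyp
end
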